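/- arXiv:2311.11188 — 9 statements merged into one kernel-verified Lean document; each statement's English description precedes it below -/
import Mathlib

section
/- Let σ be a positive definite density matrix and π an exponential-form e-projection of F_3(σ) onto M_a. Then for every positive definite density matrix ρ ∈ M_a, the Pythagorean identity D(ρ‖F_3(σ)) = D(ρ‖π) + D(π‖F_3(σ)) holds. -/
noncomputable section
open scoped Matrix ComplexOrder

/-- Matrix logarithm via the real continuous functional calculus. -/
def mlog {d : ℕ} (A : Matrix (Fin d) (Fin d) ℂ) : Matrix (Fin d) (Fin d) ℂ :=
  cfc Real.log A

/-- Quantum relative entropy `D(ρ‖σ) = Re Tr(ρ (log ρ − log σ))`. -/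
def relEnt {d : ℕ} (ρ σ : Matrix (Fin d) (Fin d) ℂ) : ℝ :=
  (Matrix.trace (ρ * (mlog ρ - mlog σ))).re

/-- A positive definite density matrix. -/
def IsPDDensity {d : ℕ} (ρ : Matrix (Fin d) (Fin d) ℂ) : Prop :=
  ρ.PosDef ∧ ρ.trace = 1

/-- A density matrix. -/
def IsDensity {d : ℕ} (ρ : Matrix (Fin d) (Fin d) ℂ) : Prop :=
  ρ.PosSemidef ∧ ρ.trace = 1

/-- Membership in the mixture family determined by `H` and `a`. -/
def InMix {d k : ℕ} (H : Fin k → Matrix (Fin d) (Fin d) ℂ) (a : Fin k → ℝ)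
    (ρ : Matrix (Fin d) (Fin d) ℂ) : Prop :=
  ∀ i, (Matrix.trace (ρ * H i)).re = a i

/-- The objective function `G(ρ) = Re Tr(ρ Ω(ρ))`. -/
def objG {d : ℕ} (Ω : Matrix (Fin d) (Fin d) ℂ → Matrix (Fin d) (Fin d) ℂ)
    (ρ : Matrix (Fin d) (Fin d) ℂ) : ℝ :=
  (Matrix.trace (ρ * Ω ρ)).re

/-- The extended objective `J_γ(ρ,σ) = γ D(ρ‖σ) + Re Tr(ρ Ω(σ))`. -/
def objJ {d : ℕ} (Ω : Matrix (Fin d) (Fin d) ℂ → Matrix (Fin d) (Fin d) ℂ) (γ : ℝ)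
    (ρ σ : Matrix (Fin d) (Fin d) ℂ) : ℝ :=
  γ * relEnt ρ σ + (Matrix.trace (ρ * Ω σ)).re

/-- The normalization factor `κ(σ) = Re Tr exp(log σ − (1/γ) Ω(σ))`. -/
def kappa {d : ℕ} (Ω : Matrix (Fin d) (Fin d) ℂ → Matrix (Fin d) (Fin d) ℂ) (γ : ℝ)
    (σ : Matrix (Fin d) (Fin d) ℂ) : ℝ :=
  (Matrix.trace (NormedSpace.exp (mlog σ - (1/γ) • Ω σ))).re

/-- The map `F_3(σ) = exp(log σ − (1/γ) Ω(σ)) / κ(σ)`. -/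
def F3 {d : ℕ} (Ω : Matrix (Fin d) (Fin d) ℂ → Matrix (Fin d) (Fin d) ℂ) (γ : ℝ)
    (σ : Matrix (Fin d) (Fin d) ℂ) : Matrix (Fin d) (Fin d) ℂ :=
  (kappa Ω γ σ)⁻¹ • NormedSpace.exp (mlog σ - (1/γ) • Ω σ)

/-- `π` is an exponential-form e-projection of `F_3(σ)` onto the mixture family. -/
def IsEProj {d k : ℕ} (Ω : Matrix (Fin d) (Fin d) ℂ → Matrix (Fin d) (Fin d) ℂ) (γ : ℝ)
    (H : Fin k → Matrix (Fin d) (Fin d) ℂ) (a : Fin k → ℝ)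
    (σ π : Matrix (Fin d) (Fin d) ℂ) : Prop :=
  IsPDDensity π ∧ InMix H a π ∧
    ∃ (τ : Fin k → ℝ) (c : ℝ),
      mlog π = mlog σ - (1/γ) • Ω σ + ∑ j, (τ j) • H j + c • (1 : Matrix (Fin d) (Fin d) ℂ)


/-- Pythagorean identity for the e-projection. -/
theorem stmt1 {d k : ℕ} (hd : 1 ≤ d)
    (Ω : Matrix (Fin d) (Fin d) ℂ → Matrix (Fin d) (Fin d) ℂ)
    (hΩcont : Continuous Ω)
    (hΩherm : ∀ ρ, IsDensity ρ → (Ω ρ).IsHermitian)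
    (γ : ℝ) (hγ : 0 < γ)
    (H : Fin k → Matrix (Fin d) (Fin d) ℂ) (hH : ∀ i, (H i).IsHermitian)
    (a : Fin k → ℝ)
    (σ π : Matrix (Fin d) (Fin d) ℂ)
    (hσ : IsPDDensity σ)
    (hπ : IsEProj Ω γ H a σ π) :
    ∀ ρ : Matrix (Fin d) (Fin d) ℂ, IsPDDensity ρ → InMix H a ρ →
      relEnt ρ (F3 Ω γ σ) = relEnt ρ π + relEnt π (F3 Ω γ σ) := by
  letI : NormedRing (Matrix (Fin d) (Fin d) ℂ) := Matrix.linftyOpNormedRing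
  letI : NormedAlgebra ℝ (Matrix (Fin d) (Fin d) ℂ) := Matrix.linftyOpNormedAlgebra
  letI : CompleteSpace (Matrix (Fin d) (Fin d) ℂ) := FiniteDimensional.complete ℝ _
  haveI : Nonempty (Fin d) := Fin.pos_iff_nonempty.mp hd
  obtain ⟨⟨hπpd, hπtr⟩, hπmix, τ, c, hπlog⟩ := hπ
  set A : Matrix (Fin d) (Fin d) ℂ := mlog σ - (1/γ) • Ω σ with hAdef
  -- A is selfadjoint
  have hΩσ : (Ω σ).IsHermitian := hΩherm σ ⟨hσ.1.posSemidef, hσ.2⟩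
  have hA : IsSelfAdjoint A := by
    apply IsSelfAdjoint.sub
    · exact cfc_predicate Real.log σ
    · exact IsSelfAdjoint.smul (IsSelfAdjoint.all _) hΩσ.isSelfAdjoint
  have hA' : A.IsHermitian := hA
  have hexp : NormedSpace.exp A = NormedSpace.exp A :=
    rfl
  have hcfc : cfc Real.exp A = NormedSpace.exp A :=
    @CFC.real_exp_eq_normedSpace_exp _ _ _ _ Matrix.IsHermitian.instContinuousFunctionalCalculus A hA
  -- κ > 0
  have hκ : 0 < kappa Ω γ σ := by
    have h3 : (Matrix.trace (NormedSpace.exp A)).re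
        = ∑ i, Real.exp (hA'.eigenvalues i) := by
      rw [hexp, ← hcfc, hA'.cfc_eq Real.exp, Matrix.IsHermitian.cfc]
      rw [Unitary.conjStarAlgAut_apply, Matrix.trace_mul_cycle,
        Unitary.star_mul_self_of_mem (Matrix.IsHermitian.eigenvectorUnitary hA').prop,
        one_mul, Matrix.trace_diagonal, Complex.re_sum]
      simp [Function.comp, Complex.exp_ofReal_re]
    have : kappa Ω γ σ = ∑ i, Real.exp (hA'.eigenvalues i) := h3
    rw [this]
    exact Finset.sum_pos (fun i _ => Real.exp_pos _) Finset.univ_nonempty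
  -- spectrum of exp A is positive
  have hspec : ∀ x ∈ spectrum ℝ (NormedSpace.exp A), 0 < x := by
    rw [← hcfc, cfc_map_spectrum Real.exp A]
    rintro x ⟨y, -, rfl⟩
    exact Real.exp_pos y
  -- log of F3
  have hlogF3 : mlog (F3 Ω γ σ)
      = A - (Real.log (kappa Ω γ σ)) • (1 : Matrix (Fin d) (Fin d) ℂ) := by
    have h1 : mlog (F3 Ω γ σ) = @CFC.log _ _ _ _ Matrix.IsHermitian.instContinuousFunctionalCalculus ((kappa Ω γ σ)⁻¹ • NormedSpace.exp A) := by
      rw [F3, ← hAdef, hexp]; rfl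
    rw [h1, @CFC.log_smul _ _ _ _ Matrix.IsHermitian.instContinuousFunctionalCalculus _ (NormedSpace.exp A) (fun x hx => (hspec x hx).ne') (inv_pos.mpr hκ).ne'
      (hcfc ▸ cfc_predicate Real.exp A)]
    erw [@CFC.log_exp _ _ _ _ Matrix.IsHermitian.instContinuousFunctionalCalculus A hA]
    rw [Real.log_inv, Algebra.algebraMap_eq_smul_one, neg_smul]
    abel
  -- the difference matrix
  set T : Matrix (Fin d) (Fin d) ℂ := mlog π - mlog (F3 Ω γ σ) with hTdef
  have hT : T = ∑ j, (τ j) • H j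
      + (c + Real.log (kappa Ω γ σ)) • (1 : Matrix (Fin d) (Fin d) ℂ) := by
    rw [hTdef, hπlog, hlogF3, add_smul]
    abel
  -- key computation
  have key : ∀ ρ' : Matrix (Fin d) (Fin d) ℂ, ρ'.trace = 1 → InMix H a ρ' →
      (Matrix.trace (ρ' * T)).re
        = (∑ j, τ j * a j) + (c + Real.log (kappa Ω γ σ)) := by
    intro ρ' htr hmix
    rw [hT, mul_add, Matrix.trace_add, Complex.add_re, Finset.mul_sum]
    congr 1
    · rw [Matrix.trace_sum, Complex.re_sum]
      refine Finset.sum_congr rfl fun j _ => ?_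
      rw [mul_smul_comm, Matrix.trace_smul, ← hmix j]
      simp [Complex.real_smul, Complex.mul_re]
    · rw [mul_smul_comm, mul_one, Matrix.trace_smul, htr]
      simp [Complex.real_smul]
  intro ρ hρ hρmix
  have hsplit : relEnt ρ (F3 Ω γ σ) = relEnt ρ π + (Matrix.trace (ρ * T)).re := by
    rw [relEnt, relEnt, hTdef, ← Complex.add_re, ← Matrix.trace_add]
    congr 2
    noncomm_ring
  have hπF3 : relEnt π (F3 Ω γ σ) = (Matrix.trace (π * T)).re := by
    rw [relEnt, hTdef]
  rw [hsplit, hπF3, key ρ hρ.2 hρmix, key π hπtr hπmix]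

end
end

section
/- Let σ be a positive definite density matrix and π an exponential-form e-projection of F_3(σ) onto M_a. Then for every positive definite density matrix ρ ∈ M_a one has J_γ(ρ,σ) ≥ J_γ(π,σ), and moreover J_γ(π,σ) = γ D(π‖F_3(σ)) − γ log κ(σ). (Thus π minimizes ρ ↦ J_γ(ρ,σ) over positive definite elements of M_a.) -/
noncomputable section
open scoped Matrix ComplexOrder

/-! ### Auxiliary lemmas -/

lemma re_smul (r : ℝ) (z : ℂ) : (r • z).re = r * z.re := by
  simp [Complex.real_smul]

lemma term_re (a b : ℝ) (z : ℂ) :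
    ((a : ℂ) * z * (b : ℂ) * (starRingEnd ℂ) z).re = a * b * Complex.normSq z := by
  have h : (a : ℂ) * z * (b : ℂ) * (starRingEnd ℂ) z
      = ((a * b * Complex.normSq z : ℝ) : ℂ) := by
    have : (a : ℂ) * z * (b : ℂ) * (starRingEnd ℂ) z
        = (a : ℂ) * (b : ℂ) * (z * (starRingEnd ℂ) z) := by ring
    rw [this, Complex.mul_conj]
    push_cast
    ring
  rw [h, Complex.ofReal_re]

lemma trace_pair {d : ℕ} (U V : Matrix (Fin d) (Fin d) ℂ) (f g : Fin d → ℝ) :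
    (Matrix.trace ((U * Matrix.diagonal (RCLike.ofReal ∘ f) * star U) *
      (V * Matrix.diagonal (RCLike.ofReal ∘ g) * star V))).re
    = ∑ i, ∑ j, f i * g j * Complex.normSq ((star U * V) i j) := by
  have h1 : (U * Matrix.diagonal (RCLike.ofReal ∘ f) * star U) *
      (V * Matrix.diagonal (RCLike.ofReal ∘ g) * star V)
      = U * (Matrix.diagonal (RCLike.ofReal ∘ f) * (star U * V) *
          Matrix.diagonal (RCLike.ofReal ∘ g) * star V) := by
    simp only [Matrix.mul_assoc]
  rw [h1, Matrix.trace_mul_comm]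
  have h2 : (Matrix.diagonal (RCLike.ofReal ∘ f) * (star U * V) *
        Matrix.diagonal (RCLike.ofReal ∘ g) * star V) * U
      = (Matrix.diagonal (RCLike.ofReal ∘ f) * (star U * V) *
        Matrix.diagonal (RCLike.ofReal ∘ g)) * star (star U * V) := by
    rw [star_mul, star_star]
    simp only [Matrix.mul_assoc]
  rw [h2]
  rw [Matrix.trace]
  rw [Complex.re_sum]
  refine Finset.sum_congr rfl fun i _ => ?_
  rw [Matrix.diag_apply, Matrix.mul_apply, Complex.re_sum]
  refine Finset.sum_congr rfl fun j _ => ?_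
  rw [Matrix.mul_diagonal, Matrix.diagonal_mul, Matrix.star_apply]
  exact term_re (f i) (g j) ((star U * V) i j)

lemma row_sum {d : ℕ} (W : Matrix (Fin d) (Fin d) ℂ) (hW : W * star W = 1) (i : Fin d) :
    ∑ j, Complex.normSq (W i j) = 1 := by
  have h := congrFun (congrFun hW i) i
  have h2 : (W * star W) i i = ((∑ j, Complex.normSq (W i j) : ℝ) : ℂ) := by
    rw [Matrix.mul_apply]
    push_cast
    refine Finset.sum_congr rfl fun j _ => ?_
    rw [Matrix.star_apply, ← Complex.mul_conj]
    rfl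
  rw [h2] at h
  have : ((∑ j, Complex.normSq (W i j) : ℝ) : ℂ) = ((1 : ℝ) : ℂ) := by
    rw [h]; simp [Matrix.one_apply]
  exact_mod_cast this

lemma col_sum {d : ℕ} (W : Matrix (Fin d) (Fin d) ℂ) (hW : star W * W = 1) (j : Fin d) :
    ∑ i, Complex.normSq (W i j) = 1 := by
  have h := congrFun (congrFun hW j) j
  have h2 : (star W * W) j j = ((∑ i, Complex.normSq (W i j) : ℝ) : ℂ) := by
    rw [Matrix.mul_apply]
    push_cast
    refine Finset.sum_congr rfl fun i _ => ?_
    rw [Matrix.star_apply, mul_comm, ← Complex.mul_conj]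
    rfl
  rw [h2] at h
  have : ((∑ i, Complex.normSq (W i j) : ℝ) : ℂ) = ((1 : ℝ) : ℂ) := by
    rw [h]; simp [Matrix.one_apply]
  exact_mod_cast this

lemma trace_spectral {d : ℕ} (U : Matrix (Fin d) (Fin d) ℂ) (hU : star U * U = 1)
    (f : Fin d → ℝ) :
    Matrix.trace (U * Matrix.diagonal (RCLike.ofReal ∘ f) * star U)
      = ((∑ i, f i : ℝ) : ℂ) := by
  rw [Matrix.trace_mul_cycle, hU, one_mul, Matrix.trace_diagonal]
  push_cast
  rfl

lemma klein_point {p q : ℝ} (hp : 0 < p) (hq : 0 < q) :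
    p - q ≤ p * Real.log p - p * Real.log q := by
  have h := Real.log_le_sub_one_of_pos (div_pos hq hp)
  rw [Real.log_div hq.ne' hp.ne'] at h
  have h1 := mul_le_mul_of_nonneg_left h hp.le
  have h2 : p * (q / p - 1) = q - p := by field_simp
  nlinarith

/-- Klein's inequality: nonnegativity of the quantum relative entropy. -/
lemma klein {d : ℕ} {ρ π : Matrix (Fin d) (Fin d) ℂ} (hρ : ρ.PosDef) (hπ : π.PosDef)
    (ht : ρ.trace = π.trace) :
    0 ≤ (Matrix.trace (ρ * (mlog ρ - mlog π))).re := by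
  have hρh := hρ.1
  have hπh := hπ.1
  set U : Matrix (Fin d) (Fin d) ℂ := ↑(Matrix.IsHermitian.eigenvectorUnitary hρh) with hUdef
  set V : Matrix (Fin d) (Fin d) ℂ := ↑(Matrix.IsHermitian.eigenvectorUnitary hπh) with hVdef
  set p := hρh.eigenvalues with hpdef
  set q := hπh.eigenvalues with hqdef
  have hUU : star U * U = 1 :=
    Matrix.mem_unitaryGroup_iff'.mp (Matrix.IsHermitian.eigenvectorUnitary hρh).2
  have hUU' : U * star U = 1 :=
    Matrix.mem_unitaryGroup_iff.mp (Matrix.IsHermitian.eigenvectorUnitary hρh).2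
  have hVV : star V * V = 1 :=
    Matrix.mem_unitaryGroup_iff'.mp (Matrix.IsHermitian.eigenvectorUnitary hπh).2
  have hVV' : V * star V = 1 :=
    Matrix.mem_unitaryGroup_iff.mp (Matrix.IsHermitian.eigenvectorUnitary hπh).2
  have hW1 : (star U * V) * star (star U * V) = 1 := by
    rw [star_mul, star_star]
    calc star U * V * (star V * U) = star U * (V * star V) * U := by
          simp only [Matrix.mul_assoc]
      _ = 1 := by rw [hVV', mul_one, hUU]
  have hW2 : star (star U * V) * (star U * V) = 1 := by
    rw [star_mul, star_star]
    calc star V * U * (star U * V) = star V * (U * star U) * V := by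
          simp only [Matrix.mul_assoc]
      _ = 1 := by rw [hUU', mul_one, hVV]
  have hmρ : mlog ρ = U * Matrix.diagonal (RCLike.ofReal ∘ (Real.log ∘ p)) * star U := by
    rw [mlog, hρh.cfc_eq]; rfl
  have hmπ : mlog π = V * Matrix.diagonal (RCLike.ofReal ∘ (Real.log ∘ q)) * star V := by
    rw [mlog, hπh.cfc_eq]; rfl
  have hρs : ρ = U * Matrix.diagonal (RCLike.ofReal ∘ p) * star U := hρh.spectral_theorem
  have hπs : π = V * Matrix.diagonal (RCLike.ofReal ∘ q) * star V := hπh.spectral_theorem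
  have tr1 : (Matrix.trace (ρ * mlog ρ)).re
      = ∑ i, ∑ j, p i * Real.log (p j) * Complex.normSq ((star U * U) i j) := by
    conv_lhs => rw [hmρ, hρs]
    exact trace_pair U U p (Real.log ∘ p)
  have tr1' : (Matrix.trace (ρ * mlog ρ)).re = ∑ i, p i * Real.log (p i) := by
    rw [tr1, hUU]
    refine Finset.sum_congr rfl fun i _ => ?_
    simp [Matrix.one_apply, apply_ite Complex.normSq, mul_ite, Finset.sum_ite_eq']
  have tr2 : (Matrix.trace (ρ * mlog π)).re
      = ∑ i, ∑ j, p i * Real.log (q j) * Complex.normSq ((star U * V) i j) := by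
    conv_lhs => rw [hmπ, hρs]
    exact trace_pair U V p (Real.log ∘ q)
  have htrρ : (Matrix.trace ρ).re = ∑ i, p i := by
    conv_lhs => rw [hρs]
    rw [trace_spectral U hUU p, Complex.ofReal_re]
  have htrπ : (Matrix.trace π).re = ∑ j, q j := by
    conv_lhs => rw [hπs]
    rw [trace_spectral V hVV q, Complex.ofReal_re]
  have hrow : ∀ i, ∑ j, Complex.normSq ((star U * V) i j) = 1 := row_sum _ hW1
  have hcol : ∀ j, ∑ i, Complex.normSq ((star U * V) i j) = 1 := col_sum _ hW2
  rw [Matrix.mul_sub, Matrix.trace_sub, Complex.sub_re, tr1', tr2]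
  have expand : ∑ i, p i * Real.log (p i)
      = ∑ i, ∑ j, p i * Real.log (p i) * Complex.normSq ((star U * V) i j) := by
    refine Finset.sum_congr rfl fun i _ => ?_
    rw [← Finset.mul_sum, hrow i, mul_one]
  rw [expand]
  have hzero : ∑ i, ∑ j, (p i - q j) * Complex.normSq ((star U * V) i j) = 0 := by
    have h1 : ∑ i, ∑ j, (p i - q j) * Complex.normSq ((star U * V) i j)
        = (∑ i, ∑ j, p i * Complex.normSq ((star U * V) i j))
          - ∑ i, ∑ j, q j * Complex.normSq ((star U * V) i j) := by
      simp [sub_mul, Finset.sum_sub_distrib]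
    rw [h1]
    have h2 : ∑ i, ∑ j, p i * Complex.normSq ((star U * V) i j) = ∑ i, p i := by
      refine Finset.sum_congr rfl fun i _ => ?_
      rw [← Finset.mul_sum, hrow i, mul_one]
    have h3 : ∑ i, ∑ j, q j * Complex.normSq ((star U * V) i j) = ∑ j, q j := by
      rw [Finset.sum_comm]
      refine Finset.sum_congr rfl fun j _ => ?_
      rw [← Finset.mul_sum, hcol j, mul_one]
    rw [h2, h3]
    have := congrArg Complex.re ht
    rw [htrρ, htrπ] at this
    linarith
  have hle : ∑ i, ∑ j, (p i - q j) * Complex.normSq ((star U * V) i j)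
      ≤ (∑ i, ∑ j, p i * Real.log (p i) * Complex.normSq ((star U * V) i j))
        - ∑ i, ∑ j, p i * Real.log (q j) * Complex.normSq ((star U * V) i j) := by
    rw [← Finset.sum_sub_distrib]
    refine Finset.sum_le_sum fun i _ => ?_
    rw [← Finset.sum_sub_distrib]
    refine Finset.sum_le_sum fun j _ => ?_
    rw [← sub_mul]
    refine mul_le_mul_of_nonneg_right ?_ (Complex.normSq_nonneg _)
    exact klein_point (hρ.eigenvalues_pos i) (hπ.eigenvalues_pos j)
  linarith

lemma exp_c_eq_r {d : ℕ} (X : Matrix (Fin d) (Fin d) ℂ) :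
    NormedSpace.exp X = NormedSpace.exp X :=
  rfl

open scoped Matrix.Norms.L2Operator in
lemma mlog_smul_exp {d : ℕ} (X : Matrix (Fin d) (Fin d) ℂ) (hX : IsSelfAdjoint X)
    {r : ℝ} (hr : 0 < r) :
    mlog (r • NormedSpace.exp X) = Real.log r • (1 : Matrix (Fin d) (Fin d) ℂ) + X := by
  rw [exp_c_eq_r]
  have hexp : NormedSpace.exp X = cfc Real.exp X := (CFC.real_exp_eq_normedSpace_exp hX).symm
  have hsa : IsSelfAdjoint (NormedSpace.exp X) := by
    rw [hexp]; exact cfc_predicate _ _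
  have hspec : ∀ x ∈ spectrum ℝ (NormedSpace.exp X), 0 < x := by
    rw [hexp, cfc_map_spectrum Real.exp X]
    rintro - ⟨x, -, rfl⟩
    exact Real.exp_pos x
  have h := CFC.log_smul (A := Matrix (Fin d) (Fin d) ℂ) (r := r)
    (NormedSpace.exp X) (fun x hx => (hspec x hx).ne') hr.ne' hsa
  rw [CFC.log_exp X hX] at h
  have hmm : mlog (r • NormedSpace.exp X) = CFC.log (r • NormedSpace.exp X) := rfl
  rw [hmm, h, Algebra.algebraMap_eq_smul_one]

open scoped Matrix.Norms.L2Operator in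
lemma trace_exp_pos {d : ℕ} (hd : 1 ≤ d) (X : Matrix (Fin d) (Fin d) ℂ)
    (hX : IsSelfAdjoint X) :
    0 < (Matrix.trace (NormedSpace.exp X)).re := by
  have hXh : X.IsHermitian := hX
  rw [exp_c_eq_r, ← CFC.real_exp_eq_normedSpace_exp hX, hXh.cfc_eq]
  have hcfc : hXh.cfc Real.exp
      = (Matrix.IsHermitian.eigenvectorUnitary hXh : Matrix (Fin d) (Fin d) ℂ) *
        Matrix.diagonal (RCLike.ofReal ∘ (Real.exp ∘ hXh.eigenvalues)) *
        star (Matrix.IsHermitian.eigenvectorUnitary hXh : Matrix (Fin d) (Fin d) ℂ) := rfl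
  rw [hcfc, trace_spectral _
    (Matrix.mem_unitaryGroup_iff'.mp (Matrix.IsHermitian.eigenvectorUnitary hXh).2) _,
    Complex.ofReal_re]
  have : Nonempty (Fin d) := ⟨⟨0, hd⟩⟩
  exact Finset.sum_pos (fun i _ => Real.exp_pos _) Finset.univ_nonempty

/-- The e-projection minimizes `ρ ↦ J_γ(ρ,σ)` over positive definite
elements of `M_a`, and `J_γ(π,σ) = γ D(π‖F_3(σ)) − γ log κ(σ)`. -/
theorem stmt2 {d k : ℕ} (hd : 1 ≤ d)
    (Ω : Matrix (Fin d) (Fin d) ℂ → Matrix (Fin d) (Fin d) ℂ)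
    (hΩcont : Continuous Ω)
    (hΩherm : ∀ ρ, IsDensity ρ → (Ω ρ).IsHermitian)
    (γ : ℝ) (hγ : 0 < γ)
    (H : Fin k → Matrix (Fin d) (Fin d) ℂ) (hH : ∀ i, (H i).IsHermitian)
    (a : Fin k → ℝ)
    (σ π : Matrix (Fin d) (Fin d) ℂ)
    (hσ : IsPDDensity σ)
    (hπ : IsEProj Ω γ H a σ π) :
    (∀ ρ : Matrix (Fin d) (Fin d) ℂ, IsPDDensity ρ → InMix H a ρ →
        objJ Ω γ ρ σ ≥ objJ Ω γ π σ) ∧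
      objJ Ω γ π σ = γ * relEnt π (F3 Ω γ σ) - γ * Real.log (kappa Ω γ σ) := by
  obtain ⟨hπd, hπmix, τ, c, hlogπ⟩ := hπ
  have hγ' : γ ≠ 0 := ne_of_gt hγ
  have hΩσ : IsSelfAdjoint (Ω σ) := hΩherm σ ⟨hσ.1.posSemidef, hσ.2⟩
  have hlogσsa : IsSelfAdjoint (mlog σ) := by
    rw [mlog]; exact cfc_predicate _ _
  have hXsa : IsSelfAdjoint (mlog σ - (1/γ) • Ω σ) :=
    hlogσsa.sub (IsSelfAdjoint.smul (star_trivial _) hΩσ)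
  -- objJ in terms of X
  have key0 : ∀ ρ : Matrix (Fin d) (Fin d) ℂ,
      objJ Ω γ ρ σ = γ * (Matrix.trace (ρ * (mlog ρ - (mlog σ - (1/γ) • Ω σ)))).re := by
    intro ρ
    have hsplit : ρ * (mlog ρ - (mlog σ - (1/γ) • Ω σ))
        = ρ * (mlog ρ - mlog σ) + (1/γ) • (ρ * Ω σ) := by
      rw [← mul_smul_comm, ← Matrix.mul_add]
      congr 1
      abel
    rw [objJ, relEnt, hsplit, Matrix.trace_add, Matrix.trace_smul, Complex.add_re, re_smul]
    field_simp
  -- use the exponential form of π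
  have key1 : ∀ ρ : Matrix (Fin d) (Fin d) ℂ, ρ.trace = 1 → InMix H a ρ →
      (Matrix.trace (ρ * (mlog ρ - (mlog σ - (1/γ) • Ω σ)))).re
        = (Matrix.trace (ρ * (mlog ρ - mlog π))).re + ((∑ j, τ j * a j) + c) := by
    intro ρ hρt hρmix
    have hX : mlog σ - (1/γ) • Ω σ = mlog π - (∑ j, τ j • H j) - c • 1 := by
      rw [hlogπ]; abel
    rw [hX]
    have hsplit : ρ * (mlog ρ - (mlog π - (∑ j, τ j • H j) - c • 1))
        = ρ * (mlog ρ - mlog π) + (∑ j, τ j • (ρ * H j)) + c • ρ := by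
      have h1 : mlog ρ - (mlog π - (∑ j, τ j • H j) - c • 1)
          = (mlog ρ - mlog π) + (∑ j, τ j • H j) + c • (1 : Matrix (Fin d) (Fin d) ℂ) := by
        abel
      rw [h1, Matrix.mul_add, Matrix.mul_add, Matrix.mul_sum]
      congr 1
      · congr 1
        exact Finset.sum_congr rfl fun j _ => (mul_smul_comm _ _ _)
      · rw [mul_smul_comm, mul_one]
    rw [hsplit, Matrix.trace_add, Matrix.trace_add, Matrix.trace_sum, Matrix.trace_smul,
      Complex.add_re, Complex.add_re, re_smul, hρt]
    have hsum : (∑ j, Matrix.trace (τ j • (ρ * H j))).re = ∑ j, τ j * a j := by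
      rw [Complex.re_sum]
      refine Finset.sum_congr rfl fun j _ => ?_
      rw [Matrix.trace_smul, re_smul, hρmix j]
    rw [hsum, Complex.one_re]
    ring
  -- value at π
  have objπ : objJ Ω γ π σ = γ * (0 + ((∑ j, τ j * a j) + c)) := by
    rw [key0 π, key1 π hπd.2 hπmix, sub_self, Matrix.mul_zero, Matrix.trace_zero]
    norm_num
  constructor
  · intro ρ hρ hρmix
    rw [ge_iff_le, key0 ρ, key1 ρ hρ.2 hρmix, objπ]
    have h0 := klein hρ.1 hπd.1 (by rw [hρ.2, hπd.2])
    have := mul_le_mul_of_nonneg_left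
      (add_le_add_right h0 ((∑ j, τ j * a j) + c)) hγ.le
    linarith
  · -- the identity at π
    have hκ : 0 < kappa Ω γ σ := trace_exp_pos hd _ hXsa
    have hml : mlog (F3 Ω γ σ)
        = Real.log ((kappa Ω γ σ)⁻¹) • (1 : Matrix (Fin d) (Fin d) ℂ)
          + (mlog σ - (1/γ) • Ω σ) := by
      rw [F3]
      exact mlog_smul_exp _ hXsa (inv_pos.mpr hκ)
    have hRE : relEnt π (F3 Ω γ σ)
        = (Matrix.trace (π * (mlog π - (mlog σ - (1/γ) • Ω σ)))).re
          + Real.log (kappa Ω γ σ) := by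
      rw [relEnt, hml, Real.log_inv]
      have hsplit : π * (mlog π - (-Real.log (kappa Ω γ σ) • (1 : Matrix (Fin d) (Fin d) ℂ)
            + (mlog σ - (1/γ) • Ω σ)))
          = π * (mlog π - (mlog σ - (1/γ) • Ω σ)) + Real.log (kappa Ω γ σ) • π := by
        have h1 : mlog π - (-Real.log (kappa Ω γ σ) • (1 : Matrix (Fin d) (Fin d) ℂ)
              + (mlog σ - (1/γ) • Ω σ))
            = (mlog π - (mlog σ - (1/γ) • Ω σ))
              + Real.log (kappa Ω γ σ) • (1 : Matrix (Fin d) (Fin d) ℂ) := by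
          rw [neg_smul]
          abel
        rw [h1, Matrix.mul_add, mul_smul_comm, mul_one]
      rw [hsplit, Matrix.trace_add, Matrix.trace_smul, Complex.add_re, re_smul, hπd.2]
      simp
    rw [key0 π, hRE]
    ring

end
end

section
/- Let σ be a positive definite density matrix and π an exponential-form e-projection of F_3(σ) onto M_a. Then for every positive definite density matrix ρ ∈ M_a, J_γ(ρ,σ) = J_γ(π,σ) + γ D(ρ‖π). -/
noncomputable section
open scoped Matrix ComplexOrder

/-- `J_γ(ρ,σ) = J_γ(π,σ) + γ D(ρ‖π)` for the e-projection `π`. -/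
theorem stmt3 {d k : ℕ} (hd : 1 ≤ d)
    (Ω : Matrix (Fin d) (Fin d) ℂ → Matrix (Fin d) (Fin d) ℂ)
    (hΩcont : Continuous Ω)
    (hΩherm : ∀ ρ, IsDensity ρ → (Ω ρ).IsHermitian)
    (γ : ℝ) (hγ : 0 < γ)
    (H : Fin k → Matrix (Fin d) (Fin d) ℂ) (hH : ∀ i, (H i).IsHermitian)
    (a : Fin k → ℝ)
    (σ π : Matrix (Fin d) (Fin d) ℂ)
    (hσ : IsPDDensity σ)
    (hπ : IsEProj Ω γ H a σ π) :
    ∀ ρ : Matrix (Fin d) (Fin d) ℂ, IsPDDensity ρ → InMix H a ρ →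
      objJ Ω γ ρ σ = objJ Ω γ π σ + γ * relEnt ρ π := by
  obtain ⟨hπd, hπmix, τ, c, hlog⟩ := hπ
  intro ρ hρd hρmix
  have hγ' : γ ≠ 0 := ne_of_gt hγ
  set X := (1/γ : ℝ) • Ω σ with hX
  set S := ∑ j, (τ j) • H j with hS
  set C := c • (1 : Matrix (Fin d) (Fin d) ℂ) with hC
  have hE : mlog π - mlog σ = -X + S + C := by rw [hlog]; abel
  have htr : ∀ (M : Matrix (Fin d) (Fin d) ℂ), M.trace = 1 → InMix H a M →
      (Matrix.trace (M * (-X + S + C))).re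
        = -((1/γ) * (Matrix.trace (M * Ω σ)).re) + (∑ j, τ j * a j) + c := by
    intro M hMtr hMmix
    have hx : (Matrix.trace (M * X)).re = (1/γ) * (Matrix.trace (M * Ω σ)).re := by
      rw [hX, Matrix.mul_smul, Matrix.trace_smul, Complex.real_smul,
        Complex.re_ofReal_mul]
    have hs : (Matrix.trace (M * S)).re = ∑ j, τ j * a j := by
      rw [hS, Finset.mul_sum, Matrix.trace_sum, Complex.re_sum]
      refine Finset.sum_congr rfl fun j _ => ?_
      rw [Matrix.mul_smul, Matrix.trace_smul, Complex.real_smul,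
        Complex.re_ofReal_mul, hMmix j]
    have hc : (Matrix.trace (M * C)).re = c := by
      rw [hC, Matrix.mul_smul, mul_one, Matrix.trace_smul, hMtr]
      simp
    rw [Matrix.mul_add, Matrix.mul_add, Matrix.mul_neg, Matrix.trace_add,
      Matrix.trace_add, Matrix.trace_neg]
    simp only [Complex.add_re, Complex.neg_re, hx, hs, hc]
  have hπterm := htr π hπd.2 hπmix
  have hρterm := htr ρ hρd.2 hρmix
  have hρπ : (Matrix.trace (ρ * (mlog ρ - mlog π))).re
      = (Matrix.trace (ρ * (mlog ρ - mlog σ))).re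
        - (Matrix.trace (ρ * (-X + S + C))).re := by
    rw [← Complex.sub_re, ← Matrix.trace_sub, ← Matrix.mul_sub]
    congr 2
    rw [← hE]; abel
  have hππ : (Matrix.trace (π * (mlog π - mlog σ))).re
      = (Matrix.trace (π * (-X + S + C))).re := by rw [hE]
  simp only [objJ, relEnt, hρπ, hππ, hπterm, hρterm]
  field_simp
  ring

end
end

section
/- Let (ρ^{(t)})_{t≥1} be a sequence of positive definite density matrices such that ρ^{(1)} ∈ M_a, for each t ≥ 1 the matrix ρ^{(t+1)} is an exponential-form e-projection of F_3(ρ^{(t)}) onto M_a, and for each t ≥ 1 the pair satisfies Re Tr(ρ^{(t+1)} (Ω(ρ^{(t+1)}) − Ω(ρ^{(t)}))) ≤ γ D(ρ^{(t+1)}‖ρ^{(t)}). Then for all t ≥ 1, γ D(ρ^{(t)}‖ρ^{(t+1)}) ≤ G(ρ^{(t)}) − G(ρ^{(t+1)}). -/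
noncomputable section
open scoped Matrix ComplexOrder

lemma trace_decomp {d k : ℕ} (Hm : Fin k → Matrix (Fin d) (Fin d) ℂ) (a : Fin k → ℝ)
    (τ : Fin k → ℝ) (c : ℝ) (ρ A : Matrix (Fin d) (Fin d) ℂ)
    (hmix : InMix Hm a ρ) (htr : ρ.trace = 1) :
    (Matrix.trace (ρ * (A + (∑ j, (τ j) • Hm j) + c • 1))).re
      = (Matrix.trace (ρ * A)).re + (∑ j, τ j * a j) + c := by
  simp only [Matrix.mul_add, Matrix.trace_add, Finset.mul_sum, Matrix.trace_sum,
    Matrix.mul_smul, Matrix.trace_smul, mul_one, htr, Complex.add_re, Complex.re_sum]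
  congr 1
  · congr 1
    refine Finset.sum_congr rfl fun j _ => ?_
    rw [Complex.real_smul, Complex.re_ofReal_mul, hmix j]
  · simp [Complex.real_smul]

/-- `γ D(ρ^{(t)}‖ρ^{(t+1)}) ≤ G(ρ^{(t)}) − G(ρ^{(t+1)})` along the algorithm. -/
theorem stmt6 {d k : ℕ} (hd : 1 ≤ d)
    (Ω : Matrix (Fin d) (Fin d) ℂ → Matrix (Fin d) (Fin d) ℂ)
    (hΩcont : Continuous Ω)
    (hΩherm : ∀ ρ, IsDensity ρ → (Ω ρ).IsHermitian)
    (γ : ℝ) (hγ : 0 < γ)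
    (H : Fin k → Matrix (Fin d) (Fin d) ℂ) (hH : ∀ i, (H i).IsHermitian)
    (a : Fin k → ℝ)
    (ρ : ℕ → Matrix (Fin d) (Fin d) ℂ)
    (hPD : ∀ t, 1 ≤ t → IsPDDensity (ρ t))
    (hinit : InMix H a (ρ 1))
    (hproj : ∀ t, 1 ≤ t → IsEProj Ω γ H a (ρ t) (ρ (t + 1)))
    (hcond : ∀ t, 1 ≤ t →
      (Matrix.trace (ρ (t + 1) * (Ω (ρ (t + 1)) - Ω (ρ t)))).re
        ≤ γ * relEnt (ρ (t + 1)) (ρ t)) :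
    ∀ t, 1 ≤ t →
      γ * relEnt (ρ t) (ρ (t + 1)) ≤ objG Ω (ρ t) - objG Ω (ρ (t + 1)) := by
  intro t ht
  obtain ⟨hπPD, hπmix, τ, c, hlog⟩ := hproj t ht
  have hσPD := hPD t ht
  have hσmix : InMix H a (ρ t) := by
    rcases eq_or_lt_of_le ht with h | h
    · rw [← h]; exact hinit
    · have h1 : 1 ≤ t - 1 := by omega
      have := (hproj (t - 1) h1).2.1
      rwa [Nat.sub_add_cancel ht] at this
  set σ := ρ t with hσ
  set π := ρ (t + 1) with hπ
  have hL : mlog π - mlog σ = (-(1/γ)) • Ω σ + (∑ j, (τ j) • H j) + c • 1 := by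
    rw [hlog, neg_smul]; abel
  have hLσ := trace_decomp H a τ c σ ((-(1/γ)) • Ω σ) hσmix hσPD.2
  have hLπ := trace_decomp H a τ c π ((-(1/γ)) • Ω σ) hπmix hπPD.2
  have hsm : ∀ X : Matrix (Fin d) (Fin d) ℂ,
      (Matrix.trace (X * ((-(1/γ)) • Ω σ))).re = (-(1/γ)) * (Matrix.trace (X * Ω σ)).re := by
    intro X
    rw [Matrix.mul_smul, Matrix.trace_smul, Complex.real_smul, Complex.re_ofReal_mul]
  have e2 : relEnt π σ = (-(1/γ)) * (Matrix.trace (π * Ω σ)).re + (∑ j, τ j * a j) + c := by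
    unfold relEnt
    rw [hL, hLπ, hsm]
  have e1 : relEnt σ π
      = -((-(1/γ)) * (Matrix.trace (σ * Ω σ)).re + (∑ j, τ j * a j) + c) := by
    unfold relEnt
    have : mlog σ - mlog π = -(mlog π - mlog σ) := by abel
    rw [this, Matrix.mul_neg, Matrix.trace_neg, Complex.neg_re, hL, hLσ, hsm]
  have h1' : γ * relEnt σ π
      = (Matrix.trace (σ * Ω σ)).re - γ * (∑ j, τ j * a j) - γ * c := by
    rw [e1]; field_simp; ring
  have h2' : γ * relEnt π σ
      = -(Matrix.trace (π * Ω σ)).re + γ * (∑ j, τ j * a j) + γ * c := by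
    rw [e2]; field_simp
  have h3 := hcond t ht
  rw [Matrix.mul_sub, Matrix.trace_sub, Complex.sub_re] at h3
  rw [← hσ, ← hπ] at h3
  unfold objG
  linarith

end
end

section
/- Let (ρ^{(t)})_{t≥1} be a sequence of positive definite density matrices such that ρ^{(1)} ∈ M_a, for each t ≥ 1 the matrix ρ^{(t+1)} is an exponential-form e-projection of F_3(ρ^{(t)}) onto M_a, and for each t ≥ 1 the pair satisfies Re Tr(ρ^{(t+1)} (Ω(ρ^{(t+1)}) − Ω(ρ^{(t)}))) ≤ γ D(ρ^{(t+1)}‖ρ^{(t)}). Then the real sequence (G(ρ^{(t)}))_{t≥1} converges: there exists L ∈ ℝ with G(ρ^{(t)}) → L as t → ∞. -/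
noncomputable section
open scoped Matrix ComplexOrder

namespace Stmt7Aux

open Matrix

lemma mlog_spec {d : ℕ} {ρ : Matrix (Fin d) (Fin d) ℂ} (h : ρ.PosDef) :
    mlog ρ = (h.1.eigenvectorUnitary : Matrix (Fin d) (Fin d) ℂ) *
      diagonal (RCLike.ofReal ∘ Real.log ∘ h.1.eigenvalues) *
      star (h.1.eigenvectorUnitary : Matrix (Fin d) (Fin d) ℂ) := by
  rw [mlog, Matrix.IsHermitian.cfc_eq h.1, Matrix.IsHermitian.cfc, Unitary.conjStarAlgAut_apply]

lemma trace_diag_conj {d : ℕ} (W : Matrix (Fin d) (Fin d) ℂ) (a b : Fin d → ℂ) :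
    Matrix.trace (Matrix.diagonal a * W * Matrix.diagonal b * Wᴴ)
      = ∑ i, ∑ j, a i * b j * (W i j * (starRingEnd ℂ) (W i j)) := by
  simp [Matrix.trace, Matrix.mul_apply, Matrix.diagonal, Matrix.diag, Finset.mul_sum,
    Matrix.conjTranspose_apply]
  congr 1; ext i; congr 1; ext j; ring

lemma sum_eigenvalues_eq_one {d : ℕ} {ρ : Matrix (Fin d) (Fin d) ℂ} (h : ρ.PosDef)
    (h1 : ρ.trace = 1) : ∑ i, h.1.eigenvalues i = 1 := by
  have hspec := h.1.spectral_theorem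
  have : ρ.trace = ∑ i, ((h.1.eigenvalues i : ℝ) : ℂ) := by
    conv_lhs => rw [hspec, Unitary.conjStarAlgAut_apply]
    rw [Matrix.trace_mul_cycle]
    rw [show (star (h.1.eigenvectorUnitary : Matrix (Fin d) (Fin d) ℂ)) *
      (h.1.eigenvectorUnitary : Matrix (Fin d) (Fin d) ℂ) = 1 from
      (Matrix.mem_unitaryGroup_iff').mp (h.1.eigenvectorUnitary).2, Matrix.one_mul,
      Matrix.trace_diagonal]
    rfl
  rw [h1] at this
  exact_mod_cast this.symm

lemma re_trace_mul_mlog_self {d : ℕ} {ρ : Matrix (Fin d) (Fin d) ℂ} (h : ρ.PosDef) :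
    (Matrix.trace (ρ * mlog ρ)).re = ∑ i, h.1.eigenvalues i * Real.log (h.1.eigenvalues i) := by
  set U : Matrix (Fin d) (Fin d) ℂ := (h.1.eigenvectorUnitary : Matrix (Fin d) (Fin d) ℂ) with hUdef
  have hU' : star U * U = 1 := (Matrix.mem_unitaryGroup_iff').mp (h.1.eigenvectorUnitary).2
  set Dp : Matrix (Fin d) (Fin d) ℂ := diagonal (RCLike.ofReal ∘ h.1.eigenvalues)
  set Dl : Matrix (Fin d) (Fin d) ℂ := diagonal (RCLike.ofReal ∘ Real.log ∘ h.1.eigenvalues)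
  have key : ρ * mlog ρ = U * (Dp * Dl) * star U := by
    conv_lhs => rw [mlog_spec h]
    conv_lhs => lhs; rw [h.1.spectral_theorem, Unitary.conjStarAlgAut_apply]
    simp only [Matrix.mul_assoc]
    rw [show (star U) * (U * (Dl * star U)) = Dl * star U from by
      rw [← Matrix.mul_assoc, hU', Matrix.one_mul]]
  rw [key, Matrix.trace_mul_cycle, ← Matrix.mul_assoc, hU', Matrix.one_mul]
  have : Dp * Dl = diagonal (fun i => ((h.1.eigenvalues i : ℝ) : ℂ) *
      ((Real.log (h.1.eigenvalues i) : ℝ) : ℂ)) := by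
    simp [Dp, Dl, Matrix.diagonal_mul_diagonal]
  rw [this, Matrix.trace_diagonal]
  push_cast
  simp

lemma re_trace_mul_mlog {d : ℕ} {ρ σ : Matrix (Fin d) (Fin d) ℂ} (hρ : ρ.PosDef)
    (hσ : σ.PosDef) :
    ∃ P : Fin d → Fin d → ℝ, (∀ i j, 0 ≤ P i j) ∧ (∀ i, ∑ j, P i j = 1) ∧
      (∀ j, ∑ i, P i j = 1) ∧
      (Matrix.trace (ρ * mlog σ)).re
        = ∑ i, ∑ j, hρ.1.eigenvalues i * Real.log (hσ.1.eigenvalues j) * P i j := by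
  set U : Matrix (Fin d) (Fin d) ℂ := (hρ.1.eigenvectorUnitary : Matrix (Fin d) (Fin d) ℂ)
  set V : Matrix (Fin d) (Fin d) ℂ := (hσ.1.eigenvectorUnitary : Matrix (Fin d) (Fin d) ℂ)
  have hU' : star U * U = 1 := (Matrix.mem_unitaryGroup_iff').mp (hρ.1.eigenvectorUnitary).2
  have hUr : U * star U = 1 := (Matrix.mem_unitaryGroup_iff).mp (hρ.1.eigenvectorUnitary).2
  set W : Matrix (Fin d) (Fin d) ℂ := star U * V with hWdef
  have hWmem : W ∈ Matrix.unitaryGroup (Fin d) ℂ :=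
    mul_mem (Unitary.star_mem (hρ.1.eigenvectorUnitary).2) (hσ.1.eigenvectorUnitary).2
  have hWr : W * star W = 1 := (Matrix.mem_unitaryGroup_iff).mp hWmem
  have hWl : star W * W = 1 := (Matrix.mem_unitaryGroup_iff').mp hWmem
  set Dp : Matrix (Fin d) (Fin d) ℂ := diagonal (RCLike.ofReal ∘ hρ.1.eigenvalues) with hDp
  set Dl : Matrix (Fin d) (Fin d) ℂ :=
    diagonal (RCLike.ofReal ∘ Real.log ∘ hσ.1.eigenvalues) with hDl
  refine ⟨fun i j => Complex.normSq (W i j), fun i j => Complex.normSq_nonneg _, ?_, ?_, ?_⟩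
  · intro i
    have := congrArg (fun M : Matrix (Fin d) (Fin d) ℂ => (M i i).re) hWr
    simpa [Matrix.mul_apply, Matrix.star_eq_conjTranspose, Matrix.conjTranspose_apply,
      Complex.mul_conj, Matrix.one_apply_eq] using this
  · intro j
    have := congrArg (fun M : Matrix (Fin d) (Fin d) ℂ => (M j j).re) hWl
    simp only [Matrix.mul_apply, Matrix.star_eq_conjTranspose, Matrix.conjTranspose_apply] at this
    simpa [Complex.star_def, Complex.conj_mul', Matrix.one_apply_eq, Complex.normSq_eq_norm_sq,
      ← Complex.ofReal_pow, Complex.ofReal_re] using this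
  · have key : ρ * mlog σ = U * (Dp * W * Dl * star W) * star U := by
      conv_lhs => rw [mlog_spec hσ]
      conv_lhs => lhs; rw [hρ.1.spectral_theorem, Unitary.conjStarAlgAut_apply]
      rw [hWdef]
      simp only [Matrix.star_mul, star_star]
      simp only [Matrix.mul_assoc]
      rw [show U * star U = 1 from hUr, Matrix.mul_one]
    rw [key, Matrix.trace_mul_cycle, ← Matrix.mul_assoc, hU', Matrix.one_mul]
    rw [show star W = Wᴴ from rfl, trace_diag_conj]
    rw [Complex.re_sum]
    refine Finset.sum_congr rfl fun i _ => ?_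
    rw [Complex.re_sum]
    refine Finset.sum_congr rfl fun j _ => ?_
    simp only [hDp, hDl]
    rw [Complex.mul_conj]
    have hco : (RCLike.ofReal : ℝ → ℂ) = Complex.ofReal := rfl
    rw [hco]
    simp only [Function.comp_apply]
    push_cast
    simp

theorem klein {d : ℕ} {ρ σ : Matrix (Fin d) (Fin d) ℂ} (hρ : IsPDDensity ρ)
    (hσ : IsPDDensity σ) : 0 ≤ relEnt ρ σ := by
  obtain ⟨P, hP0, hProw, hPcol, htr⟩ := re_trace_mul_mlog hρ.1 hσ.1
  set p := hρ.1.1.eigenvalues with hpdef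
  set q := hσ.1.1.eigenvalues with hqdef
  have hp : ∀ i, 0 < p i := fun i => hρ.1.eigenvalues_pos i
  have hq : ∀ j, 0 < q j := fun j => hσ.1.eigenvalues_pos j
  have hps : ∑ i, p i = 1 := sum_eigenvalues_eq_one hρ.1 hρ.2
  have hqs : ∑ j, q j = 1 := sum_eigenvalues_eq_one hσ.1 hσ.2
  have hRE : relEnt ρ σ = (∑ i, p i * Real.log (p i))
      - ∑ i, ∑ j, p i * Real.log (q j) * P i j := by
    rw [relEnt, Matrix.mul_sub, Matrix.trace_sub, Complex.sub_re,
      re_trace_mul_mlog_self hρ.1, htr]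
  have hfirst : (∑ i, p i * Real.log (p i)) = ∑ i, ∑ j, p i * Real.log (p i) * P i j := by
    refine Finset.sum_congr rfl fun i _ => ?_
    rw [← Finset.mul_sum, hProw i, mul_one]
  have hzero : (∑ i, ∑ j, P i j * (p i - q j)) = 0 := by
    have h1 : (∑ i, ∑ j, P i j * p i) = 1 := by
      calc (∑ i, ∑ j, P i j * p i) = ∑ i, p i * ∑ j, P i j := by
            refine Finset.sum_congr rfl fun i _ => ?_
            rw [Finset.mul_sum]; exact Finset.sum_congr rfl fun j _ => by ring
        _ = 1 := by simp only [hProw, mul_one, hps]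
    have h2 : (∑ i, ∑ j, P i j * q j) = 1 := by
      rw [Finset.sum_comm]
      calc (∑ j, ∑ i, P i j * q j) = ∑ j, q j * ∑ i, P i j := by
            refine Finset.sum_congr rfl fun j _ => ?_
            rw [Finset.mul_sum]; exact Finset.sum_congr rfl fun i _ => by ring
        _ = 1 := by simp only [hPcol, mul_one, hqs]
    have h3 : (∑ i, ∑ j, P i j * (p i - q j))
        = (∑ i, ∑ j, P i j * p i) - ∑ i, ∑ j, P i j * q j := by
      rw [← Finset.sum_sub_distrib]
      refine Finset.sum_congr rfl fun i _ => ?_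
      rw [← Finset.sum_sub_distrib]
      exact Finset.sum_congr rfl fun j _ => by ring
    rw [h3, h1, h2, sub_self]
  have key : ∀ i j, P i j * (p i - q j)
      ≤ p i * Real.log (p i) * P i j - p i * Real.log (q j) * P i j := by
    intro i j
    have hlog : Real.log (q j) - Real.log (p i) ≤ q j / p i - 1 := by
      have h := Real.log_le_sub_one_of_pos (div_pos (hq j) (hp i))
      rwa [Real.log_div (ne_of_gt (hq j)) (ne_of_gt (hp i))] at h
    have h3 := mul_le_mul_of_nonneg_left hlog
      (mul_nonneg (le_of_lt (hp i)) (hP0 i j))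
    have hpne : p i ≠ 0 := (hp i).ne'
    have h4 : p i * P i j * (q j / p i - 1) = P i j * q j - p i * P i j := by
      field_simp
    nlinarith [h3, h4]
  calc (0:ℝ) = ∑ i, ∑ j, P i j * (p i - q j) := hzero.symm
    _ ≤ ∑ i, ∑ j, (p i * Real.log (p i) * P i j - p i * Real.log (q j) * P i j) :=
        Finset.sum_le_sum fun i _ => Finset.sum_le_sum fun j _ => key i j
    _ = relEnt ρ σ := by
        rw [hRE, hfirst, ← Finset.sum_sub_distrib]
        refine Finset.sum_congr rfl fun i _ => ?_
        rw [← Finset.sum_sub_distrib]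

lemma relEnt_self {d : ℕ} (ρ : Matrix (Fin d) (Fin d) ℂ) : relEnt ρ ρ = 0 := by
  simp [relEnt, sub_self]

lemma objJ_formula {d k : ℕ} (Ω : Matrix (Fin d) (Fin d) ℂ → Matrix (Fin d) (Fin d) ℂ)
    (γ : ℝ) (hγ : 0 < γ) (H : Fin k → Matrix (Fin d) (Fin d) ℂ) (a : Fin k → ℝ)
    (τ : Fin k → ℝ) (c : ℝ) {σ π μ : Matrix (Fin d) (Fin d) ℂ}
    (hμ1 : μ.trace = 1) (hμmix : InMix H a μ)
    (hlog : mlog π = mlog σ - (1/γ) • Ω σ + ∑ j, τ j • H j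
      + c • (1 : Matrix (Fin d) (Fin d) ℂ)) :
    objJ Ω γ μ σ = γ * relEnt μ π + γ * ((∑ j, τ j * a j) + c) := by
  have hdiff : mlog π - mlog σ = -((1/γ) • Ω σ) + (∑ j, τ j • H j)
      + c • (1 : Matrix (Fin d) (Fin d) ℂ) := by
    rw [hlog]; abel
  have hsplit : relEnt μ σ = relEnt μ π + (Matrix.trace (μ * (mlog π - mlog σ))).re := by
    have h : μ * (mlog μ - mlog σ) = μ * (mlog μ - mlog π) + μ * (mlog π - mlog σ) := by
      rw [← Matrix.mul_add, sub_add_sub_cancel]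
    rw [relEnt, h, Matrix.trace_add, Complex.add_re, relEnt]
  have hT : (Matrix.trace (μ * (mlog π - mlog σ))).re
      = -((1/γ) * (Matrix.trace (μ * Ω σ)).re) + (∑ j, τ j * a j) + c := by
    rw [hdiff]
    have h : μ * (-((1/γ) • Ω σ) + (∑ j, τ j • H j) + c • (1 : Matrix (Fin d) (Fin d) ℂ))
        = -((1/γ) • (μ * Ω σ)) + (∑ j, τ j • (μ * H j)) + c • μ := by
      simp [Matrix.mul_add, Matrix.mul_neg, mul_smul_comm, Matrix.mul_sum, Matrix.mul_one]
    rw [h]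
    simp only [Matrix.trace_add, Matrix.trace_neg, Matrix.trace_smul, Matrix.trace_sum,
      Complex.add_re, Complex.neg_re, Complex.re_sum, Complex.real_smul, Complex.mul_re,
      Complex.ofReal_re, Complex.ofReal_im, zero_mul, sub_zero, hμ1, Complex.one_re,
      Complex.one_im, mul_zero, mul_one]
    congr 1
    congr 1
    exact Finset.sum_congr rfl fun j _ => by rw [hμmix j]
  have hR := hγ.ne'
  rw [objJ, hsplit, hT]
  field_simp
  ring

lemma step_le {d k : ℕ} (Ω : Matrix (Fin d) (Fin d) ℂ → Matrix (Fin d) (Fin d) ℂ)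
    (γ : ℝ) (hγ : 0 < γ) (H : Fin k → Matrix (Fin d) (Fin d) ℂ) (a : Fin k → ℝ)
    {σ π : Matrix (Fin d) (Fin d) ℂ}
    (hσ : IsPDDensity σ) (hσmix : InMix H a σ)
    (hπ : IsPDDensity π) (hπmix : InMix H a π)
    (τ : Fin k → ℝ) (c : ℝ)
    (hlog : mlog π = mlog σ - (1/γ) • Ω σ + ∑ j, τ j • H j
      + c • (1 : Matrix (Fin d) (Fin d) ℂ))
    (hcond : (Matrix.trace (π * (Ω π - Ω σ))).re ≤ γ * relEnt π σ) :
    objG Ω π ≤ objG Ω σ := by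
  have h1 : objG Ω π ≤ objJ Ω γ π σ := by
    rw [objG, objJ]
    have h : (Matrix.trace (π * Ω π)).re
        = (Matrix.trace (π * (Ω π - Ω σ))).re + (Matrix.trace (π * Ω σ)).re := by
      rw [Matrix.mul_sub, Matrix.trace_sub, Complex.sub_re]; ring
    linarith
  have h2 : objJ Ω γ π σ ≤ objJ Ω γ σ σ := by
    rw [objJ_formula Ω γ hγ H a τ c hπ.2 hπmix hlog,
        objJ_formula Ω γ hγ H a τ c hσ.2 hσmix hlog]
    have hk := klein hσ hπ
    have h0 : relEnt π π = 0 := relEnt_self π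
    rw [h0]
    nlinarith
  have h3 : objJ Ω γ σ σ = objG Ω σ := by
    rw [objJ, objG, relEnt_self]; ring
  linarith

lemma diag_re_nonneg {d : ℕ} {ρ : Matrix (Fin d) (Fin d) ℂ} (h : ρ.PosSemidef) (i : Fin d) :
    0 ≤ (ρ i i).re ∧ (ρ i i).im = 0 := by
  have h0 : 0 ≤ ρ i i := by
    have := h.dotProduct_mulVec_nonneg (Pi.single i 1)
    simpa [dotProduct, Matrix.mulVec, Pi.single_apply] using this
  rw [Complex.le_def] at h0
  exact ⟨h0.1, h0.2.symm⟩

lemma diag_re_le_one {d : ℕ} {ρ : Matrix (Fin d) (Fin d) ℂ} (h : IsDensity ρ) (i : Fin d) :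
    (ρ i i).re ≤ 1 := by
  have htr : (∑ j, (ρ j j).re) = 1 := by
    have := congrArg Complex.re h.2
    simpa [Matrix.trace, Matrix.diag, Complex.re_sum] using this
  calc (ρ i i).re ≤ ∑ j, (ρ j j).re :=
        Finset.single_le_sum (fun j _ => (diag_re_nonneg h.1 j).1) (Finset.mem_univ i)
    _ = 1 := htr

lemma entry_abs_le_one {d : ℕ} {ρ : Matrix (Fin d) (Fin d) ℂ} (h : IsDensity ρ) (i j : Fin d) :
    ‖ρ i j‖ ≤ 1 := by
  set B : Matrix (Fin 2) (Fin 2) ℂ := ρ.submatrix ![i, j] ![i, j] with hB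
  have hBpsd : B.PosSemidef := h.1.submatrix _
  have hdet : B.det = ρ i i * ρ j j - ρ i j * ρ j i := by
    rw [Matrix.det_fin_two]; simp [hB]
  have hdet2 : B.det = ∏ t, ((hBpsd.1.eigenvalues t : ℝ) : ℂ) := hBpsd.1.det_eq_prod_eigenvalues
  have hdetre : 0 ≤ (B.det).re := by
    rw [hdet2]
    rw [show (∏ t, ((hBpsd.1.eigenvalues t : ℝ) : ℂ)) = (((∏ t, hBpsd.1.eigenvalues t : ℝ)) : ℂ)
      from by push_cast; ring]
    rw [Complex.ofReal_re]
    exact Finset.prod_nonneg fun t _ => hBpsd.eigenvalues_nonneg t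
  have hji : ρ j i = (starRingEnd ℂ) (ρ i j) := by
    have hherm := h.1.1
    rw [Matrix.IsHermitian] at hherm
    conv_lhs => rw [← hherm]
    simp [Matrix.conjTranspose_apply]
  have hii := diag_re_nonneg h.1 i
  have hjj := diag_re_nonneg h.1 j
  have hdre : (B.det).re = (ρ i i).re * (ρ j j).re - Complex.normSq (ρ i j) := by
    rw [hdet, hji]
    rw [Complex.sub_re, Complex.mul_re, Complex.mul_conj]
    simp [hii.2, hjj.2]
  have h1 : Complex.normSq (ρ i j) ≤ 1 := by
    have := diag_re_le_one h i
    have := diag_re_le_one h j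
    nlinarith [hii.1, hjj.1]
  have h2 : (‖ρ i j‖)^2 = Complex.normSq (ρ i j) := Complex.sq_norm _
  nlinarith [norm_nonneg (ρ i j)]

lemma isCompact_density {d : ℕ} :
    IsCompact {ρ : Matrix (Fin d) (Fin d) ℂ | IsDensity ρ} := by
  have h2 : IsCompact {A : Matrix (Fin d) (Fin d) ℂ | ∀ i j, ‖A i j‖ ≤ 1} := by
    have he : {A : Matrix (Fin d) (Fin d) ℂ | ∀ i j, ‖A i j‖ ≤ 1}
        = Set.univ.pi (fun _ : Fin d => Set.univ.pi fun _ : Fin d =>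
            Metric.closedBall (0:ℂ) 1) := by
      ext A
      constructor
      · intro h i _ j _
        exact mem_closedBall_zero_iff.mpr (h i j)
      · intro h i j
        exact mem_closedBall_zero_iff.mp (h i (Set.mem_univ i) j (Set.mem_univ j))
    rw [he]
    exact isCompact_univ_pi fun i => isCompact_univ_pi fun j => isCompact_closedBall 0 1
  refine h2.of_isClosed_subset ?_ ?_
  · have hcl1 : IsClosed {ρ : Matrix (Fin d) (Fin d) ℂ | ρ.trace = 1} :=
      isClosed_eq (continuous_id.matrix_trace) continuous_const
    have hcl2 : IsClosed {ρ : Matrix (Fin d) (Fin d) ℂ | ρ.PosSemidef} := by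
      have he : {ρ : Matrix (Fin d) (Fin d) ℂ | ρ.PosSemidef}
          = {ρ : Matrix (Fin d) (Fin d) ℂ | ρᴴ = ρ} ∩
            ⋂ x : Fin d → ℂ, {ρ : Matrix (Fin d) (Fin d) ℂ |
              0 ≤ dotProduct (star x) (ρ *ᵥ x)} := by
        ext A
        simp [Matrix.posSemidef_iff_dotProduct_mulVec, Matrix.IsHermitian, Set.mem_iInter]
      rw [he]
      refine IsClosed.inter (isClosed_eq (continuous_id.matrix_conjTranspose) continuous_id) ?_
      refine isClosed_iInter fun x => ?_
      have hcont : Continuous fun ρ : Matrix (Fin d) (Fin d) ℂ =>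
          dotProduct (star x) (ρ *ᵥ x) :=
        (continuous_const.dotProduct (continuous_id.matrix_mulVec continuous_const))
      have hcs : IsClosed {z : ℂ | 0 ≤ z} := by
        have hz : {z : ℂ | 0 ≤ z} = {z : ℂ | 0 ≤ z.re} ∩ {z : ℂ | z.im = 0} := by
          ext z; simp [Complex.le_def, eq_comm]
        rw [hz]
        exact (isClosed_le continuous_const Complex.continuous_re).inter
          (isClosed_eq Complex.continuous_im continuous_const)
      exact hcs.preimage hcont
    have he2 : {ρ : Matrix (Fin d) (Fin d) ℂ | IsDensity ρ}
        = {ρ : Matrix (Fin d) (Fin d) ℂ | ρ.PosSemidef} ∩ {ρ | ρ.trace = 1} := rfl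
    rw [he2]
    exact hcl2.inter hcl1
  · intro A hA i j
    have := entry_abs_le_one hA i j
    simpa using this

lemma objG_bound {d : ℕ} (Ω : Matrix (Fin d) (Fin d) ℂ → Matrix (Fin d) (Fin d) ℂ)
    (hΩcont : Continuous Ω) :
    ∃ C : ℝ, ∀ ρ : Matrix (Fin d) (Fin d) ℂ, IsDensity ρ → -C ≤ objG Ω ρ := by
  have hcont : Continuous fun ρ : Matrix (Fin d) (Fin d) ℂ => objG Ω ρ :=
    Complex.continuous_re.comp ((continuous_id.matrix_mul hΩcont).matrix_trace)
  obtain ⟨C, hC⟩ := isCompact_density.exists_bound_of_continuousOn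
    (hcont.continuousOn (s := {ρ : Matrix (Fin d) (Fin d) ℂ | IsDensity ρ}))
  exact ⟨C, fun ρ hρ => by
    have := hC ρ hρ
    rw [Real.norm_eq_abs] at this
    linarith [neg_abs_le (objG Ω ρ), abs_le.mp this |>.1]⟩

end Stmt7Aux

/-- The sequence of objective values converges. -/
theorem stmt7 {d k : ℕ} (hd : 1 ≤ d)
    (Ω : Matrix (Fin d) (Fin d) ℂ → Matrix (Fin d) (Fin d) ℂ)
    (hΩcont : Continuous Ω)
    (hΩherm : ∀ ρ, IsDensity ρ → (Ω ρ).IsHermitian)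
    (γ : ℝ) (hγ : 0 < γ)
    (H : Fin k → Matrix (Fin d) (Fin d) ℂ) (hH : ∀ i, (H i).IsHermitian)
    (a : Fin k → ℝ)
    (ρ : ℕ → Matrix (Fin d) (Fin d) ℂ)
    (hPD : ∀ t, 1 ≤ t → IsPDDensity (ρ t))
    (hinit : InMix H a (ρ 1))
    (hproj : ∀ t, 1 ≤ t → IsEProj Ω γ H a (ρ t) (ρ (t + 1)))
    (hcond : ∀ t, 1 ≤ t →
      (Matrix.trace (ρ (t + 1) * (Ω (ρ (t + 1)) - Ω (ρ t)))).re
        ≤ γ * relEnt (ρ (t + 1)) (ρ t)) :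
    ∃ L : ℝ, Filter.Tendsto (fun t => objG Ω (ρ t)) Filter.atTop (nhds L) := by
  classical
  have hmix : ∀ t, 1 ≤ t → InMix H a (ρ t) := by
    intro t ht
    induction t, ht using Nat.le_induction with
    | base => exact hinit
    | succ n hn ih => exact (hproj n hn).2.1
  have hmono : ∀ t, 1 ≤ t → objG Ω (ρ (t + 1)) ≤ objG Ω (ρ t) := by
    intro t ht
    obtain ⟨hπ, hπmix, τ, c, hlog⟩ := hproj t ht
    exact Stmt7Aux.step_le Ω γ hγ H a (hPD t ht) (hmix t ht) hπ hπmix τ c hlog (hcond t ht)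
  obtain ⟨C, hC⟩ := Stmt7Aux.objG_bound Ω hΩcont
  set g : ℕ → ℝ := fun n => objG Ω (ρ (n + 1)) with hg
  have hganti : Antitone g := by
    refine antitone_nat_of_succ_le fun n => ?_
    exact hmono (n + 1) (Nat.le_add_left 1 n)
  have hgbdd : BddBelow (Set.range g) := by
    refine ⟨-C, ?_⟩
    rintro x ⟨n, rfl⟩
    refine hC (ρ (n + 1)) ?_
    have h := hPD (n + 1) (Nat.le_add_left 1 n)
    exact ⟨h.1.posSemidef, h.2⟩
  refine ⟨⨅ n, g n, ?_⟩
  have htend : Filter.Tendsto g Filter.atTop (nhds (⨅ n, g n)) :=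
    tendsto_atTop_ciInf hganti hgbdd
  exact (Filter.tendsto_add_atTop_iff_nat 1).mp htend


end
end

section
/- Let ρ and σ be positive definite density matrices in M_a, and let π be an exponential-form e-projection of F_3(σ) onto M_a. Then D(ρ‖σ) − D(ρ‖π) = (1/γ) J_γ(π,σ) − (1/γ) G(ρ) + (1/γ) Re Tr(ρ (Ω(ρ) − Ω(σ))). -/
noncomputable section
open scoped Matrix ComplexOrder

/-- First identity of the key lemma. -/
theorem stmt8 {d k : ℕ} (hd : 1 ≤ d)
    (Ω : Matrix (Fin d) (Fin d) ℂ → Matrix (Fin d) (Fin d) ℂ)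
    (hΩcont : Continuous Ω)
    (hΩherm : ∀ ρ, IsDensity ρ → (Ω ρ).IsHermitian)
    (γ : ℝ) (hγ : 0 < γ)
    (H : Fin k → Matrix (Fin d) (Fin d) ℂ) (hH : ∀ i, (H i).IsHermitian)
    (a : Fin k → ℝ)
    (ρ σ π : Matrix (Fin d) (Fin d) ℂ)
    (hρ : IsPDDensity ρ) (hρa : InMix H a ρ)
    (hσ : IsPDDensity σ) (hσa : InMix H a σ)
    (hπ : IsEProj Ω γ H a σ π) :
    relEnt ρ σ - relEnt ρ π
      = (1/γ) * objJ Ω γ π σ - (1/γ) * objG Ω ρ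
        + (1/γ) * (Matrix.trace (ρ * (Ω ρ - Ω σ))).re := by
  obtain ⟨⟨hπpd, hπtr⟩, hπa, τ, c, heq⟩ := hπ
  have h2 : mlog π - mlog σ
      = (-(1/γ)) • Ω σ + (∑ j, (τ j) • H j) + c • (1 : Matrix (Fin d) (Fin d) ℂ) := by
    rw [heq]; module
  have key : ∀ χ : Matrix (Fin d) (Fin d) ℂ, χ.trace = 1 → InMix H a χ →
      (Matrix.trace (χ * (mlog π - mlog σ))).re
        = -(1/γ) * (Matrix.trace (χ * Ω σ)).re + (∑ j, τ j * a j) + c := by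
    intro χ hχ hχa
    rw [h2, mul_add, mul_add, Finset.mul_sum, Matrix.trace_add, Matrix.trace_add,
      Matrix.trace_sum, Matrix.mul_smul, Matrix.trace_smul, Matrix.mul_smul,
      Matrix.trace_smul, mul_one, hχ]
    simp only [Complex.add_re, Complex.smul_re, Complex.re_sum, Complex.one_re]
    congr 2
    · exact Finset.sum_congr rfl fun j _ => by
        rw [Matrix.mul_smul, Matrix.trace_smul, Complex.smul_re, hχa j, smul_eq_mul]
    · simp
  have hdiff : relEnt ρ σ - relEnt ρ π
      = (Matrix.trace (ρ * (mlog π - mlog σ))).re := by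
    unfold relEnt
    rw [← Complex.sub_re, ← Matrix.trace_sub, ← Matrix.mul_sub]
    congr 2
    abel
  have hπσ : relEnt π σ = (Matrix.trace (π * (mlog π - mlog σ))).re := rfl
  have hsub : (Matrix.trace (ρ * (Ω ρ - Ω σ))).re
      = (Matrix.trace (ρ * Ω ρ)).re - (Matrix.trace (ρ * Ω σ)).re := by
    rw [Matrix.mul_sub, Matrix.trace_sub, Complex.sub_re]
  rw [hdiff, key ρ hρ.2 hρa, objJ, hπσ, key π hπtr hπa, objG, hsub]
  have hγ' : γ ≠ 0 := ne_of_gt hγ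
  field_simp
  ring

end
end

section
/- Let ρ and σ be positive definite density matrices in M_a, and let π be an exponential-form e-projection of F_3(σ) onto M_a. Then D(ρ‖σ) − D(ρ‖π) = (1/γ) G(π) − (1/γ) G(ρ) + D(π‖σ) − (1/γ) Re Tr(π (Ω(π) − Ω(σ))) + (1/γ) Re Tr(ρ (Ω(ρ) − Ω(σ))). -/
noncomputable section
open scoped Matrix ComplexOrder

/-- Second identity of the key lemma. -/
theorem stmt9 {d k : ℕ} (hd : 1 ≤ d)
    (Ω : Matrix (Fin d) (Fin d) ℂ → Matrix (Fin d) (Fin d) ℂ)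
    (hΩcont : Continuous Ω)
    (hΩherm : ∀ ρ, IsDensity ρ → (Ω ρ).IsHermitian)
    (γ : ℝ) (hγ : 0 < γ)
    (H : Fin k → Matrix (Fin d) (Fin d) ℂ) (hH : ∀ i, (H i).IsHermitian)
    (a : Fin k → ℝ)
    (ρ σ π : Matrix (Fin d) (Fin d) ℂ)
    (hρ : IsPDDensity ρ) (hρa : InMix H a ρ)
    (hσ : IsPDDensity σ) (hσa : InMix H a σ)
    (hπ : IsEProj Ω γ H a σ π) :
    relEnt ρ σ - relEnt ρ π
      = (1/γ) * objG Ω π - (1/γ) * objG Ω ρ + relEnt π σ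
        - (1/γ) * (Matrix.trace (π * (Ω π - Ω σ))).re
        + (1/γ) * (Matrix.trace (ρ * (Ω ρ - Ω σ))).re := by
  obtain ⟨⟨hπpd, hπtr⟩, hπa, τ, c, hlog⟩ := hπ
  have hρtr := hρ.2
  have hdiff : mlog π - mlog σ
      = -((1/γ) • Ω σ) + ∑ j, (τ j) • H j + c • (1 : Matrix (Fin d) (Fin d) ℂ) := by
    rw [hlog]; abel
  have key : ∀ (X : Matrix (Fin d) (Fin d) ℂ), X.trace = 1 → InMix H a X →
      (Matrix.trace (X * (mlog π - mlog σ))).re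
        = -((1/γ) * (Matrix.trace (X * Ω σ)).re) + (∑ j, τ j * a j) + c := by
    intro X hXtr hXa
    have hXa' : ∀ i, (Matrix.trace (X * H i)).re = a i := hXa
    rw [hdiff]
    simp only [Matrix.mul_add, Matrix.mul_neg, Matrix.mul_smul, Matrix.trace_add,
      Matrix.trace_neg, Matrix.trace_smul, Matrix.mul_one, Finset.mul_sum,
      Matrix.mul_sum, Matrix.trace_sum, hXtr, smul_eq_mul, mul_one,
      Complex.add_re, Complex.neg_re, Complex.real_smul, Complex.re_ofReal_mul,
      Complex.re_sum, Complex.ofReal_re, hXa']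
  have hsplit : ∀ (X A B : Matrix (Fin d) (Fin d) ℂ),
      (Matrix.trace (X * (A - B))).re = (Matrix.trace (X * A)).re - (Matrix.trace (X * B)).re := by
    intro X A B
    rw [Matrix.mul_sub, Matrix.trace_sub, Complex.sub_re]
  have hL : relEnt ρ σ - relEnt ρ π = (Matrix.trace (ρ * (mlog π - mlog σ))).re := by
    unfold relEnt
    rw [hsplit, hsplit, hsplit]; ring
  have hπσ : relEnt π σ = (Matrix.trace (π * (mlog π - mlog σ))).re := rfl
  rw [hL, key ρ hρtr hρa, hπσ, key π hπtr hπa, hsplit, hsplit]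
  unfold objG
  ring


end
end

section
/- Let ρ*, ρ, ρ' be positive definite density matrices with ρ* ∈ M_a and ρ ∈ M_a, and let ρ' be an exponential-form e-projection of F_3(ρ) onto M_a. Assume Re Tr(ρ' (Ω(ρ') − Ω(ρ))) ≤ γ D(ρ'‖ρ) and Re Tr(ρ* (Ω(ρ*) − Ω(ρ))) ≥ 0. Then D(ρ*‖ρ) − D(ρ*‖ρ') ≥ (1/γ)(G(ρ') − G(ρ*)). -/
noncomputable section
open scoped Matrix ComplexOrder

/-- One-step progress inequality towards `ρ*`. -/
theorem stmt10 {d k : ℕ} (hd : 1 ≤ d)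
    (Ω : Matrix (Fin d) (Fin d) ℂ → Matrix (Fin d) (Fin d) ℂ)
    (hΩcont : Continuous Ω)
    (hΩherm : ∀ ρ, IsDensity ρ → (Ω ρ).IsHermitian)
    (γ : ℝ) (hγ : 0 < γ)
    (H : Fin k → Matrix (Fin d) (Fin d) ℂ) (hH : ∀ i, (H i).IsHermitian)
    (a : Fin k → ℝ)
    (ρstar ρ ρ' : Matrix (Fin d) (Fin d) ℂ)
    (hρstar : IsPDDensity ρstar) (hρstara : InMix H a ρstar)
    (hρ : IsPDDensity ρ) (hρa : InMix H a ρ)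
    (hρ' : IsEProj Ω γ H a ρ ρ')
    (hcond : (Matrix.trace (ρ' * (Ω ρ' - Ω ρ))).re ≤ γ * relEnt ρ' ρ)
    (hstar : 0 ≤ (Matrix.trace (ρstar * (Ω ρstar - Ω ρ))).re) :
    relEnt ρstar ρ - relEnt ρstar ρ' ≥ (1/γ) * (objG Ω ρ' - objG Ω ρstar) := by
  obtain ⟨hρ'pd, hρ'mix, τ, c, heq⟩ := hρ'
  have key : ∀ X : Matrix (Fin d) (Fin d) ℂ, X.trace = 1 → InMix H a X →
      (Matrix.trace (X * (mlog ρ' - mlog ρ))).re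
        = -(1/γ) * (Matrix.trace (X * Ω ρ)).re + ((∑ j, τ j * a j) + c) := by
    intro X h1 ha
    have hdiff : mlog ρ' - mlog ρ = -((1/γ) • Ω ρ) + (∑ j, τ j • H j) + c • 1 := by
      rw [heq]; abel
    rw [hdiff]
    simp only [Matrix.mul_add, Matrix.mul_sub, mul_neg, Matrix.mul_smul, Matrix.mul_one,
      Finset.mul_sum, Matrix.trace_add, Matrix.trace_neg, Matrix.trace_smul, Matrix.trace_sum,
      h1, smul_eq_mul, mul_one, Complex.add_re, Complex.neg_re, Complex.re_sum,
      Complex.real_smul, Complex.mul_re, Complex.ofReal_re, Complex.ofReal_im,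
      Complex.one_re, Complex.one_im, zero_mul, sub_zero, mul_zero]
    rw [Finset.sum_congr rfl (fun j _ => by rw [ha j])]
    ring
  -- expressions
  set Tstar := (Matrix.trace (ρstar * Ω ρ)).re with hTstar
  set T' := (Matrix.trace (ρ' * Ω ρ)).re with hT'
  set S := (∑ j, τ j * a j) + c with hS
  have hL : relEnt ρstar ρ - relEnt ρstar ρ' = -(1/γ) * Tstar + S := by
    have : relEnt ρstar ρ - relEnt ρstar ρ'
        = (Matrix.trace (ρstar * (mlog ρ' - mlog ρ))).re := by
      unfold relEnt
      rw [← Complex.sub_re, ← Matrix.trace_sub, ← Matrix.mul_sub]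
      congr 2
      abel
    rw [this, key ρstar hρstar.2 hρstara]
  have hRel' : relEnt ρ' ρ = -(1/γ) * T' + S := by
    unfold relEnt
    exact key ρ' hρ'pd.2 hρ'mix
  have hsplit' : (Matrix.trace (ρ' * (Ω ρ' - Ω ρ))).re = objG Ω ρ' - T' := by
    unfold objG
    rw [Matrix.mul_sub, Matrix.trace_sub, Complex.sub_re]
  have hsplitstar : (Matrix.trace (ρstar * (Ω ρstar - Ω ρ))).re = objG Ω ρstar - Tstar := by
    unfold objG
    rw [Matrix.mul_sub, Matrix.trace_sub, Complex.sub_re]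
  rw [hsplit'] at hcond
  rw [hsplitstar] at hstar
  rw [hRel'] at hcond
  rw [hL]
  have hγne : γ ≠ 0 := hγ.ne'
  have he1 : γ * (-(1/γ) * T' + S) = -T' + γ * S := by field_simp
  rw [he1] at hcond
  have hG' : objG Ω ρ' ≤ γ * S := by linarith
  have hGs : Tstar ≤ objG Ω ρstar := by linarith
  rw [ge_iff_le, div_mul_eq_mul_div, div_le_iff₀ hγ]
  have he2 : (-(1/γ) * Tstar + S) * γ = -Tstar + S * γ := by field_simp
  rw [he2]
  nlinarith

end
end

section
/- Assume: (i) every pair of positive definite density matrices ρ, σ ∈ M_a satisfies Re Tr(ρ (Ω(ρ) − Ω(σ))) ≤ γ D(ρ‖σ); (ii) ρ* is a positive definite density matrix in M_a with G(ρ*) ≤ G(ρ) for all density matrices ρ ∈ M_a, and Re Tr(ρ* (Ω(ρ*) − Ω(σ))) ≥ 0 for every density matrix σ. Let (ρ^{(t)})_{t≥1} be a sequence of positive definite density matrices with ρ^{(1)} ∈ M_a such that for each t ≥ 1, ρ^{(t+1)} is an exponential-form e-projection of F_3(ρ^{(t)}) onto M_a. Then for every integer t_0 ≥ 1, G(ρ^{(t_0+1)})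 − G(ρ*) ≤ γ D(ρ*‖ρ^{(1)}) / t_0. -/
noncomputable section
open scoped Matrix ComplexOrder

section Aux
variable {d : ℕ}


/-- trace of cfc-product in terms of eigenvalues. -/
lemma trace_cfc_mul_cfc {A B : Matrix (Fin d) (Fin d) ℂ} (hA : A.IsHermitian)
    (hB : B.IsHermitian) (f g : ℝ → ℝ) :
    (Matrix.trace (hA.cfc f * hB.cfc g)).re =
      ∑ i, ∑ j, f (hA.eigenvalues i) * g (hB.eigenvalues j) *
        ‖((star (hA.eigenvectorUnitary : Matrix (Fin d) (Fin d) ℂ) *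
            (hB.eigenvectorUnitary : Matrix (Fin d) (Fin d) ℂ)) i j)‖ ^ 2 := by
  classical
  set U : Matrix (Fin d) (Fin d) ℂ := (hA.eigenvectorUnitary : Matrix (Fin d) (Fin d) ℂ)
  set V : Matrix (Fin d) (Fin d) ℂ := (hB.eigenvectorUnitary : Matrix (Fin d) (Fin d) ℂ)
  set M : Matrix (Fin d) (Fin d) ℂ := star U * V
  have hUU : star U * U = 1 := (Matrix.mem_unitaryGroup_iff').mp hA.eigenvectorUnitary.2
  have key : Matrix.trace (hA.cfc f * hB.cfc g) =
      Matrix.trace (Matrix.diagonal (RCLike.ofReal ∘ f ∘ hA.eigenvalues) *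
        (M * Matrix.diagonal (RCLike.ofReal ∘ g ∘ hB.eigenvalues) * star M)) := by
    rw [Matrix.IsHermitian.cfc, Matrix.IsHermitian.cfc]
    simp only [Unitary.conjStarAlgAut_apply, Unitary.coe_star]
    rw [show (U * Matrix.diagonal (RCLike.ofReal ∘ f ∘ hA.eigenvalues) * star U) *
        (V * Matrix.diagonal (RCLike.ofReal ∘ g ∘ hB.eigenvalues) * star V)
        = U * (Matrix.diagonal (RCLike.ofReal ∘ f ∘ hA.eigenvalues) *
          ((star U * V) * Matrix.diagonal (RCLike.ofReal ∘ g ∘ hB.eigenvalues) * (star V))) by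
      simp only [mul_assoc]]
    rw [Matrix.trace_mul_comm]
    rw [show Matrix.diagonal (RCLike.ofReal ∘ f ∘ hA.eigenvalues) *
        (M * Matrix.diagonal (RCLike.ofReal ∘ g ∘ hB.eigenvalues) * star V) * U
        = Matrix.diagonal (RCLike.ofReal ∘ f ∘ hA.eigenvalues) *
        (M * Matrix.diagonal (RCLike.ofReal ∘ g ∘ hB.eigenvalues) * (star V * U)) by
      simp only [mul_assoc]]
    congr 2
    have : star V * U = star M := by simp [M, star_mul]
    rw [this]
  rw [key]
  have hdiag : ∀ (v : Fin d → ℂ) (N : Matrix (Fin d) (Fin d) ℂ),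
      Matrix.trace (Matrix.diagonal v * N) = ∑ i, v i * N i i := by
    intro v N
    simp [Matrix.trace, Matrix.diag, Matrix.mul_apply, Matrix.diagonal]
  rw [hdiag]
  set N : Matrix (Fin d) (Fin d) ℂ :=
    M * Matrix.diagonal (RCLike.ofReal ∘ g ∘ hB.eigenvalues) * star M with hNdef
  have hN : ∀ i, N i i
      = ∑ j, (M i j * (g (hB.eigenvalues j) : ℂ)) * (starRingEnd ℂ) (M i j) := by
    intro i
    rw [hNdef, Matrix.star_eq_conjTranspose, Matrix.mul_apply]
    refine Finset.sum_congr rfl fun j _ => ?_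
    rw [Matrix.mul_diagonal, Matrix.conjTranspose_apply]
    rfl
  rw [Complex.re_sum]
  refine Finset.sum_congr rfl fun i _ => ?_
  rw [hN, Finset.mul_sum, Complex.re_sum]
  refine Finset.sum_congr rfl fun j _ => ?_
  simp only [Function.comp_apply]
  have hcoe : (RCLike.ofReal : ℝ → ℂ) = Complex.ofReal := rfl
  rw [hcoe]
  have : (Complex.ofReal (f (hA.eigenvalues i))) * (M i j * (Complex.ofReal (g (hB.eigenvalues j))) * (starRingEnd ℂ) (M i j))
      = ((f (hA.eigenvalues i) * g (hB.eigenvalues j) * ‖M i j‖ ^ 2 : ℝ) : ℂ) := by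
    rw [show M i j * (Complex.ofReal (g (hB.eigenvalues j))) * (starRingEnd ℂ) (M i j)
        = (Complex.ofReal (g (hB.eigenvalues j))) * (M i j * (starRingEnd ℂ) (M i j)) by ring,
      Complex.mul_conj, Complex.normSq_eq_norm_sq]
    push_cast
    ring
  rw [this, Complex.ofReal_re]

lemma trace_re_eq_sum_eigenvalues {A : Matrix (Fin d) (Fin d) ℂ} (hA : A.IsHermitian) :
    (Matrix.trace A).re = ∑ i, hA.eigenvalues i := by
  conv_lhs => rw [hA.spectral_theorem]
  rw [Unitary.conjStarAlgAut_apply, Matrix.trace_mul_cycle,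
    show star (hA.eigenvectorUnitary : Matrix (Fin d) (Fin d) ℂ) *
      (hA.eigenvectorUnitary : Matrix (Fin d) (Fin d) ℂ) = 1 from
        (Matrix.mem_unitaryGroup_iff').mp hA.eigenvectorUnitary.2,
    one_mul, Matrix.trace_diagonal, Complex.re_sum]
  rfl

lemma row_sum_normSq {M : Matrix (Fin d) (Fin d) ℂ} (hM : M * star M = 1) (i : Fin d) :
    ∑ j, ‖M i j‖ ^ 2 = 1 := by
  have h := congrFun (congrFun hM i) i
  rw [Matrix.mul_apply] at h
  have h1 : (1 : Matrix (Fin d) (Fin d) ℂ) i i = 1 := by simp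
  rw [h1] at h
  have : ∀ j, M i j * (star M) j i = ((‖M i j‖ ^ 2 : ℝ) : ℂ) := by
    intro j
    rw [Matrix.star_eq_conjTranspose, Matrix.conjTranspose_apply,
      show star (M i j) = (starRingEnd ℂ) (M i j) from rfl, Complex.mul_conj,
      Complex.normSq_eq_norm_sq]
  rw [Finset.sum_congr rfl fun j _ => this j, ← Complex.ofReal_sum] at h
  exact_mod_cast h

lemma col_sum_normSq {M : Matrix (Fin d) (Fin d) ℂ} (hM : star M * M = 1) (j : Fin d) :
    ∑ i, ‖M i j‖ ^ 2 = 1 := by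
  have h := congrFun (congrFun hM j) j
  rw [Matrix.mul_apply] at h
  have h1 : (1 : Matrix (Fin d) (Fin d) ℂ) j j = 1 := by simp
  rw [h1] at h
  have : ∀ i, (star M) j i * M i j = ((‖M i j‖ ^ 2 : ℝ) : ℂ) := by
    intro i
    rw [Matrix.star_eq_conjTranspose, Matrix.conjTranspose_apply, mul_comm,
      show star (M i j) = (starRingEnd ℂ) (M i j) from rfl, Complex.mul_conj,
      Complex.normSq_eq_norm_sq]
  rw [Finset.sum_congr rfl fun i _ => this i, ← Complex.ofReal_sum] at h
  exact_mod_cast h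

lemma klein_aux {p q : ℝ} (hp : 0 < p) (hq : 0 < q) :
    p - q ≤ p * (Real.log p - Real.log q) := by
  have h := Real.log_le_sub_one_of_pos (div_pos hq hp)
  rw [Real.log_div hq.ne' hp.ne'] at h
  have := mul_le_mul_of_nonneg_left h hp.le
  rw [mul_sub] at this
  have hpd : p * (q / p) = q := by field_simp
  nlinarith

lemma relEnt_nonneg {ρ σ : Matrix (Fin d) (Fin d) ℂ} (hρ : ρ.PosDef) (hσ : σ.PosDef)
    (hρ1 : ρ.trace = 1) (hσ1 : σ.trace = 1) : 0 ≤ relEnt ρ σ := by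
  classical
  have hρh : ρ.IsHermitian := hρ.1
  have hσh : σ.IsHermitian := hσ.1
  set U : Matrix (Fin d) (Fin d) ℂ := (hρh.eigenvectorUnitary : Matrix (Fin d) (Fin d) ℂ) with hU
  set V : Matrix (Fin d) (Fin d) ℂ := (hσh.eigenvectorUnitary : Matrix (Fin d) (Fin d) ℂ) with hV
  set p := hρh.eigenvalues
  set q := hσh.eigenvalues
  have hp : ∀ i, 0 < p i := hρ.eigenvalues_pos
  have hq : ∀ i, 0 < q i := hσ.eigenvalues_pos
  have hpsum : ∑ i, p i = 1 := by
    have := trace_re_eq_sum_eigenvalues hρh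
    rw [hρ1] at this; simpa using this.symm
  have hqsum : ∑ i, q i = 1 := by
    have := trace_re_eq_sum_eigenvalues hσh
    rw [hσ1] at this; simpa using this.symm
  have hUU : star U * U = 1 := (Matrix.mem_unitaryGroup_iff').mp hρh.eigenvectorUnitary.2
  have hUU' : U * star U = 1 := (Matrix.mem_unitaryGroup_iff).mp hρh.eigenvectorUnitary.2
  have hVV : star V * V = 1 := (Matrix.mem_unitaryGroup_iff').mp hσh.eigenvectorUnitary.2
  have hVV' : V * star V = 1 := (Matrix.mem_unitaryGroup_iff).mp hσh.eigenvectorUnitary.2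
  set M : Matrix (Fin d) (Fin d) ℂ := star U * V with hM
  have hMM : M * star M = 1 := by
    rw [hM, star_mul, star_star]
    calc star U * V * (star V * U) = star U * (V * star V) * U := by
          simp only [mul_assoc]
      _ = 1 := by rw [hVV', mul_one, hUU]
  have hMM' : star M * M = 1 := by
    rw [hM, star_mul, star_star]
    calc star V * U * (star U * V) = star V * (U * star U) * V := by
          simp only [mul_assoc]
      _ = 1 := by rw [hUU', mul_one, hVV]
  set c : Fin d → Fin d → ℝ := fun i j => ‖M i j‖ ^ 2 with hc
  have hcnn : ∀ i j, 0 ≤ c i j := fun i j => sq_nonneg _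
  have hrow : ∀ i, ∑ j, c i j = 1 := row_sum_normSq hMM
  have hcol : ∀ j, ∑ i, c i j = 1 := col_sum_normSq hMM'
  -- express relEnt
  have hρcfc : ρ = hρh.cfc id := by
    rw [← Matrix.IsHermitian.cfc_eq, cfc_id ℝ ρ]
  have hmlogρ : mlog ρ = hρh.cfc Real.log := by
    rw [mlog, Matrix.IsHermitian.cfc_eq]
  have hmlogσ : mlog σ = hσh.cfc Real.log := by
    rw [mlog, Matrix.IsHermitian.cfc_eq]
  have hsplit : relEnt ρ σ =
      (Matrix.trace (ρ * mlog ρ)).re - (Matrix.trace (ρ * mlog σ)).re := by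
    rw [relEnt, mul_sub, Matrix.trace_sub, Complex.sub_re]
  have hT1 : (Matrix.trace (ρ * mlog ρ)).re = ∑ i, p i * Real.log (p i) := by
    have he : ρ * mlog ρ = hρh.cfc id * hρh.cfc Real.log := by
      rw [hmlogρ]; exact congrArg (· * hρh.cfc Real.log) hρcfc
    rw [he, trace_cfc_mul_cfc hρh hρh id Real.log]
    refine Finset.sum_congr rfl fun i _ => ?_
    rw [Finset.sum_eq_single i]
    · rw [← hU, hUU]
      simp
      rfl
    · intro j _ hji
      rw [← hU, hUU]
      simp [Matrix.one_apply, (Ne.symm hji)]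
    · simp
  have hT2 : (Matrix.trace (ρ * mlog σ)).re = ∑ i, ∑ j, p i * Real.log (q j) * c i j := by
    have he : ρ * mlog σ = hρh.cfc id * hσh.cfc Real.log := by
      rw [hmlogσ]; exact congrArg (· * hσh.cfc Real.log) hρcfc
    rw [he, trace_cfc_mul_cfc hρh hσh id Real.log]
    rfl
  rw [hsplit, hT1, hT2]
  have hT1' : ∑ i, p i * Real.log (p i) = ∑ i, ∑ j, p i * Real.log (p i) * c i j := by
    refine Finset.sum_congr rfl fun i _ => ?_
    rw [← Finset.mul_sum, hrow, mul_one]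
  rw [hT1', ← Finset.sum_sub_distrib]
  have key : ∀ i j, c i j * (p i - q j) ≤
      p i * Real.log (p i) * c i j - p i * Real.log (q j) * c i j := by
    intro i j
    calc c i j * (p i - q j)
        ≤ c i j * (p i * (Real.log (p i) - Real.log (q j))) :=
          mul_le_mul_of_nonneg_left (klein_aux (hp i) (hq j)) (hcnn i j)
      _ = p i * Real.log (p i) * c i j - p i * Real.log (q j) * c i j := by ring
  have hzero : ∑ i, ∑ j, c i j * (p i - q j) = 0 := by
    have hin : ∀ i, ∑ j, c i j * (p i - q j) = p i - ∑ j, c i j * q j := by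
      intro i
      have : ∀ j, c i j * (p i - q j) = c i j * p i - c i j * q j := fun j => by ring
      rw [Finset.sum_congr rfl fun j _ => this j, Finset.sum_sub_distrib, ← Finset.sum_mul,
        hrow, one_mul]
    rw [Finset.sum_congr rfl fun i _ => hin i, Finset.sum_sub_distrib, hpsum, Finset.sum_comm]
    have : ∀ j, ∑ i, c i j * q j = q j := by
      intro j
      rw [← Finset.sum_mul, hcol, one_mul]
    rw [Finset.sum_congr rfl fun j _ => this j, hqsum, sub_self]
  have hfin : ∑ i, ∑ j, c i j * (p i - q j) ≤
      ∑ i, (∑ j, p i * Real.log (p i) * c i j - ∑ j, p i * Real.log (q j) * c i j) := by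
    refine Finset.sum_le_sum fun i _ => ?_
    rw [← Finset.sum_sub_distrib]
    exact Finset.sum_le_sum fun j _ => key i j
  linarith [hzero ▸ hfin]

lemma relEnt_self (ν : Matrix (Fin d) (Fin d) ℂ) : relEnt ν ν = 0 := by
  simp [relEnt]

lemma re_trace_mul_smul (ν X : Matrix (Fin d) (Fin d) ℂ) (r : ℝ) :
    (Matrix.trace (ν * (r • X))).re = r * (Matrix.trace (ν * X)).re := by
  rw [Matrix.mul_smul, Matrix.trace_smul, Complex.smul_re, smul_eq_mul]

lemma relEnt_sub_relEnt (ν σ π : Matrix (Fin d) (Fin d) ℂ) :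
    relEnt ν σ - relEnt ν π = (Matrix.trace (ν * (mlog π - mlog σ))).re := by
  simp only [relEnt, mul_sub, Matrix.trace_sub, Complex.sub_re]
  ring

end Aux

/-- Convergence rate to the global minimum. -/
theorem stmt11 {d k : ℕ} (hd : 1 ≤ d)
    (Ω : Matrix (Fin d) (Fin d) ℂ → Matrix (Fin d) (Fin d) ℂ)
    (hΩcont : Continuous Ω)
    (hΩherm : ∀ ρ, IsDensity ρ → (Ω ρ).IsHermitian)
    (γ : ℝ) (hγ : 0 < γ)
    (H : Fin k → Matrix (Fin d) (Fin d) ℂ) (hH : ∀ i, (H i).IsHermitian)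
    (a : Fin k → ℝ)
    (hcond : ∀ ρ σ : Matrix (Fin d) (Fin d) ℂ,
      IsPDDensity ρ → InMix H a ρ → IsPDDensity σ → InMix H a σ →
        (Matrix.trace (ρ * (Ω ρ - Ω σ))).re ≤ γ * relEnt ρ σ)
    (ρstar : Matrix (Fin d) (Fin d) ℂ)
    (hρstar : IsPDDensity ρstar) (hρstara : InMix H a ρstar)
    (hmin : ∀ ρ : Matrix (Fin d) (Fin d) ℂ, IsDensity ρ → InMix H a ρ →
      objG Ω ρstar ≤ objG Ω ρ)
    (hstar : ∀ σ : Matrix (Fin d) (Fin d) ℂ, IsDensity σ →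
      0 ≤ (Matrix.trace (ρstar * (Ω ρstar - Ω σ))).re)
    (ρ : ℕ → Matrix (Fin d) (Fin d) ℂ)
    (hPD : ∀ t, 1 ≤ t → IsPDDensity (ρ t))
    (hinit : InMix H a (ρ 1))
    (hproj : ∀ t, 1 ≤ t → IsEProj Ω γ H a (ρ t) (ρ (t + 1))) :
    ∀ t₀ : ℕ, 1 ≤ t₀ →
      objG Ω (ρ (t₀ + 1)) - objG Ω ρstar ≤ γ * relEnt ρstar (ρ 1) / t₀ := by
  have hγ0 : γ ≠ 0 := ne_of_gt hγ
  -- all iterates lie in the mixture family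
  have hMix : ∀ t, 1 ≤ t → InMix H a (ρ t) := by
    intro t ht
    induction t with
    | zero => omega
    | succ n ih =>
      rcases Nat.lt_or_ge n 1 with h | h
      · have : n = 0 := by omega
        subst this; exact hinit
      · exact (hproj n h).2.1
  -- key per-step estimates
  have main : ∀ t, 1 ≤ t →
      (objG Ω (ρ (t+1)) - objG Ω ρstar ≤
        γ * relEnt ρstar (ρ t) - γ * relEnt ρstar (ρ (t+1)))
      ∧ objG Ω (ρ (t+1)) ≤ objG Ω (ρ t) := by
    intro t ht
    obtain ⟨hπPD, hπMix, τ, c, heq⟩ := hproj t ht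
    set σ := ρ t with hσdef
    set π := ρ (t+1) with hπdef
    have hσPD : IsPDDensity σ := hPD t ht
    have hσMix : InMix H a σ := hMix t ht
    set S : ℝ := (∑ j, τ j * a j) + c with hS
    have hd : mlog π - mlog σ =
        -((1/γ) • Ω σ) + ((∑ j, (τ j) • H j) + c • (1 : Matrix (Fin d) (Fin d) ℂ)) := by
      rw [heq]; abel
    have L1 : ∀ ν : Matrix (Fin d) (Fin d) ℂ, ν.trace = 1 → InMix H a ν →
        relEnt ν σ - relEnt ν π
          = -((1/γ) * (Matrix.trace (ν * Ω σ)).re) + S := by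
      intro ν hν1 hνMix
      rw [relEnt_sub_relEnt, hd, mul_add, mul_add, Matrix.trace_add, Matrix.trace_add,
        Complex.add_re, Complex.add_re]
      have p1 : (Matrix.trace (ν * -((1/γ) • Ω σ))).re
          = -((1/γ) * (Matrix.trace (ν * Ω σ)).re) := by
        rw [mul_neg, Matrix.trace_neg, Complex.neg_re, re_trace_mul_smul]
      have p2 : (Matrix.trace (ν * ∑ j, (τ j) • H j)).re = ∑ j, τ j * a j := by
        rw [Finset.mul_sum, Matrix.trace_sum, Complex.re_sum]
        refine Finset.sum_congr rfl fun j _ => ?_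
        rw [re_trace_mul_smul, hνMix j]
      have p3 : (Matrix.trace (ν * (c • (1 : Matrix (Fin d) (Fin d) ℂ)))).re = c := by
        rw [re_trace_mul_smul, mul_one, hν1]
        simp
      rw [p1, p2, p3]
    have e1 := L1 ρstar hρstar.2 hρstara
    have e2 := L1 π hπPD.2 hπMix
    have e3 := L1 σ hσPD.2 hσMix
    rw [relEnt_self] at e2
    rw [relEnt_self] at e3
    have E1 : γ * relEnt ρstar σ - γ * relEnt ρstar π
        = -(Matrix.trace (ρstar * Ω σ)).re + γ * S := by
      have := congrArg (γ * ·) e1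
      rw [mul_sub] at this
      rw [this]; field_simp
    have E2 : γ * relEnt π σ = -(Matrix.trace (π * Ω σ)).re + γ * S := by
      have := congrArg (γ * ·) e2
      rw [mul_sub] at this
      rw [show γ * relEnt π σ = γ * relEnt π σ - γ * 0 by ring, this]; field_simp
    have E3 : -(γ * relEnt σ π) = -(Matrix.trace (σ * Ω σ)).re + γ * S := by
      have := congrArg (γ * ·) e3
      rw [mul_sub] at this
      rw [show -(γ * relEnt σ π) = γ * 0 - γ * relEnt σ π by ring, this]; field_simp
    have hcondπ : objG Ω π - (Matrix.trace (π * Ω σ)).re ≤ γ * relEnt π σ := by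
      have h := hcond π σ hπPD hπMix hσPD hσMix
      rw [mul_sub, Matrix.trace_sub, Complex.sub_re] at h
      exact h
    have hstarσ : (Matrix.trace (ρstar * Ω σ)).re ≤ objG Ω ρstar := by
      have h := hstar σ ⟨hσPD.1.posSemidef, hσPD.2⟩
      rw [mul_sub, Matrix.trace_sub, Complex.sub_re] at h
      have hG : objG Ω ρstar = (Matrix.trace (ρstar * Ω ρstar)).re := rfl
      linarith
    have kleinσπ : 0 ≤ relEnt σ π := relEnt_nonneg hσPD.1 hπPD.1 hσPD.2 hπPD.2
    constructor
    · linarith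
    · have : objG Ω σ = (Matrix.trace (σ * Ω σ)).re := rfl
      nlinarith [mul_nonneg hγ.le kleinσπ]
  -- telescoping with monotonicity
  have ind : ∀ t : ℕ, 1 ≤ t → (t : ℝ) * (objG Ω (ρ (t+1)) - objG Ω ρstar)
      ≤ γ * relEnt ρstar (ρ 1) - γ * relEnt ρstar (ρ (t+1)) := by
    intro t ht
    induction t with
    | zero => omega
    | succ n ih =>
      rcases Nat.lt_or_ge n 1 with h | h
      · have : n = 0 := by omega
        subst this
        simpa using (main 1 le_rfl).1
      · have h1 := ih h
        have h2 := (main (n+1) (by omega)).1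
        have h3 := (main (n+1) (by omega)).2
        have hn0 : (0:ℝ) ≤ (n:ℝ) := Nat.cast_nonneg n
        have hmul : (n:ℝ) * (objG Ω (ρ (n+1+1)) - objG Ω ρstar)
            ≤ (n:ℝ) * (objG Ω (ρ (n+1)) - objG Ω ρstar) :=
          mul_le_mul_of_nonneg_left (by linarith) hn0
        push_cast
        push_cast at h1
        nlinarith
  intro t₀ ht₀
  have hD := relEnt_nonneg hρstar.1 (hPD (t₀+1) (by omega)).1 hρstar.2 (hPD (t₀+1) (by omega)).2
  have h := ind t₀ ht₀
  have ht₀' : (0:ℝ) < (t₀:ℝ) := by exact_mod_cast Nat.pos_of_ne_zero (by omega)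
  rw [le_div_iff₀ ht₀']
  nlinarith [mul_nonneg hγ.le hD]


end
end
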